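/- arXiv:2303.03826 — 10 statements merged into one kernel-verified Lean document; each statement's English description precedes it below -/
import Mathlib

section
/- If a univariate real polynomial p with at most 2k+1 monomials, of degree d, is non-negative on the interval [0,1], then p = Σ_i g_i(t)^2 p_i(t) + (1-t) Σ_j h_j(t)^2 q_j(t), where g_i, h_j are polynomials of degree ≤ k, each p_i and q_j has only non-negative coefficients, and every summand has degree ≤ d. -/
/-!
Induction on the degree, with the number `V` of sign changes in the coefficient sequence as the
budget (`V ≤ 2k` for `2k + 1` monomials). A polynomial with non-negative coefficients is its own
certificate. If `p ≥ 0` vanishes at `x₀ ∈ [0, 1]`, it factors as `X * q`, `(1 - X) * q` or, at an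
interior root (a local minimum, hence a double root), `(X - x₀)² * q`, with `q ≥ 0` on `[0, 1]`.
Multiplying by `X - η` with `η > 0` adds a sign change (the key step of Descartes' rule of signs),
so the factor `1 - X` costs one sign change and `(X - x₀)²` costs two, which pays for the degree
they add to the squares. If instead `p > 0` on `[0, 1]` and `p` has a negative coefficient at
`X ^ j`, subtract the largest `c X ^ j` keeping `p ≥ 0`: the result has a root in `[0, 1]` and the
same sign pattern as `p`, and `c X ^ j` has non-negative coefficients.
-/

open Polynomial Finset Set

namespace SparsePositivstellensatz

theorem support_eq_of_sign_coeff_eq {p q : ℝ[X]}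
    (h : ∀ n, SignType.sign (p.coeff n) = SignType.sign (q.coeff n)) : p.support = q.support := by
  ext n
  rw [mem_support_iff, mem_support_iff, ← sign_ne_zero, h, sign_ne_zero]

theorem signVariations_congr {p q : ℝ[X]}
    (h : ∀ n, SignType.sign (p.coeff n) = SignType.sign (q.coeff n)) :
    p.signVariations = q.signVariations := by
  simp only [signVariations, coeffList, List.map_map, degree, support_eq_of_sign_coeff_eq h,
    Function.comp_def, h]

theorem coeffList_X_pow_mul {q : ℝ[X]} (hq : q ≠ 0) (t : ℕ) :
    (X ^ t * q).coeffList = q.coeffList ++ List.replicate t 0 := by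
  have hXq : X ^ t * q ≠ 0 := mul_ne_zero (pow_ne_zero t X_ne_zero) hq
  have hdeg : (X ^ t * q).natDegree + 1 = t + (q.natDegree + 1) := by
    rw [natDegree_mul (pow_ne_zero t X_ne_zero) hq, natDegree_X_pow, add_assoc]
  rw [coeffList, coeffList, withBotSucc_degree_eq_natDegree_add_one hq,
    withBotSucc_degree_eq_natDegree_add_one hXq, hdeg, List.range_add, List.reverse_append,
    List.map_append, List.map_reverse, List.map_map]
  congr 1
  · rw [← List.map_reverse]
    congr 1
    funext n
    simp [coeff_X_pow_mul']
  · rw [List.eq_replicate_iff]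
    simp +contextual [coeff_X_pow_mul']

theorem signVariations_X_pow_mul (q : ℝ[X]) (t : ℕ) :
    (X ^ t * q).signVariations = q.signVariations := by
  rcases eq_or_ne q 0 with rfl | hq
  · simp
  simp [signVariations, coeffList_X_pow_mul hq, List.filter_append]

theorem signVariations_le_card_support_sub_one (p : ℝ[X]) :
    p.signVariations ≤ #p.support - 1 := by
  induction hn : #p.support generalizing p with
  | zero => simp_all
  | succ n ih =>
    have hp : p ≠ 0 := by rintro rfl; simp at hn
    by_cases he : p.eraseLead = 0
    · simp [signVariations_eq_eraseLead_add_ite hp, he, hp]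
    · have hcard : #p.eraseLead.support = n := by rw [card_support_eraseLead, hn]; rfl
      have hpos : 0 < #p.eraseLead.support := card_pos.mpr (support_nonempty.mpr he)
      have := ih p.eraseLead hcard
      have := signVariations_le_eraseLead_succ p
      omega

theorem nonneg_on_Icc_of_mul_nonneg {c q : ℝ[X]} {a b : ℝ} (hab : a < b) (hc : c ≠ 0)
    (hc_nonneg : ∀ x ∈ Ioo a b, 0 ≤ c.eval x) (h : ∀ x ∈ Icc a b, 0 ≤ (c * q).eval x) :
    ∀ x ∈ Icc a b, 0 ≤ q.eval x := by
  have hdense : Dense {x | c.IsRoot x}ᶜ := (finite_setOfPred_isRoot hc).countable.dense_compl ℝ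
  have hsub : Icc a b ⊆ closure (Ioo a b ∩ {x | c.IsRoot x}ᶜ) := by
    rw [← closure_Ioo hab.ne]
    exact closure_minimal (hdense.open_subset_closure_inter isOpen_Ioo) isClosed_closure
  refine fun x hx => (isClosed_le continuous_const q.continuous).closure_subset_iff.mpr ?_ (hsub hx)
  rintro y ⟨hy, hcy⟩
  refine nonneg_of_mul_nonneg_right ?_ ((hc_nonneg y hy).lt_of_ne' hcy)
  simpa using h y (Ioo_subset_Icc_self hy)

theorem X_sub_C_sq_dvd_of_isLocalMin {p : ℝ[X]} {x₀ : ℝ} (hmin : IsLocalMin p.eval x₀)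
    (hroot : p.IsRoot x₀) : (X - C x₀) ^ 2 ∣ p := by
  rcases eq_or_ne p 0 with rfl | hp
  · exact dvd_zero _
  have hderiv : p.derivative.IsRoot x₀ := by
    simpa [Polynomial.deriv] using hmin.deriv_eq_zero
  exact (pow_dvd_pow _ ((one_lt_rootMultiplicity_iff_isRoot hp).mpr ⟨hroot, hderiv⟩)).trans
    (pow_rootMultiplicity_dvd p x₀)

theorem exists_sub_monomial_nonneg_isRoot {p : ℝ[X]} (a : ℕ)
    (hpos : ∀ x ∈ Icc (0 : ℝ) 1, 0 < p.eval x) :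
    ∃ c : ℝ, 0 ≤ c ∧ (∀ x ∈ Icc (0 : ℝ) 1, 0 ≤ (p - C c * X ^ a).eval x) ∧
      ∃ x₀ ∈ Icc (0 : ℝ) 1, (p - C c * X ^ a).IsRoot x₀ := by
  have hcont : ContinuousOn (fun x => x ^ a / p.eval x) (Icc 0 1) :=
    (continuousOn_pow a).div p.continuousOn fun x hx => (hpos x hx).ne'
  -- the maximiser of `x ^ a / p x` is where the largest admissible multiple of `X ^ a` touches `p`
  obtain ⟨x₀, hx₀, hmax⟩ := isCompact_Icc.exists_isMaxOn (nonempty_Icc.mpr zero_le_one) hcont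
  have hp₀ := hpos x₀ hx₀
  have hx₀a : 0 < x₀ ^ a := by
    have h1 : 0 < 1 ^ a / p.eval 1 := div_pos (by simp) (hpos 1 (right_mem_Icc.mpr zero_le_one))
    have := h1.trans_le (hmax (right_mem_Icc.mpr zero_le_one))
    exact (div_pos_iff_of_pos_right hp₀).mp this
  refine ⟨p.eval x₀ / x₀ ^ a, by positivity, fun x hx => ?_, x₀, hx₀, ?_⟩
  · have hle : x ^ a / p.eval x ≤ x₀ ^ a / p.eval x₀ := hmax hx
    rw [div_le_div_iff₀ (hpos x hx) hp₀] at hle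
    have : p.eval x₀ / x₀ ^ a * x ^ a ≤ p.eval x := by
      rw [div_mul_eq_mul_div, div_le_iff₀ hx₀a]
      linarith
    simpa using this
  · simp [IsRoot, div_mul_cancel₀ _ hx₀a.ne']

def weightedSquares (w : ℝ[X]) (k d : ℕ) : Set ℝ[X] :=
  {f | ∃ g q : ℝ[X], g.natDegree ≤ k ∧ (∀ n, 0 ≤ q.coeff n) ∧ f = w * (g ^ 2 * q) ∧
    f.natDegree ≤ d}

noncomputable def certCone (kg kh d : ℕ) : AddSubmonoid ℝ[X] :=
  AddSubmonoid.closure (weightedSquares 1 kg d ∪ weightedSquares (1 - X) kh d)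

theorem weightedSquares_mono {w : ℝ[X]} {k k' d d' : ℕ} (hk : k ≤ k') (hd : d ≤ d') :
    weightedSquares w k d ⊆ weightedSquares w k' d' := by
  rintro f ⟨g, q, hg, hq, rfl, hf⟩
  exact ⟨g, q, hg.trans hk, hq, rfl, hf.trans hd⟩

theorem certCone_mono {kg kh d kg' kh' d' : ℕ} (hg : kg ≤ kg') (hh : kh ≤ kh') (hd : d ≤ d') :
    certCone kg kh d ≤ certCone kg' kh' d' :=
  AddSubmonoid.closure_mono <|
    union_subset_union (weightedSquares_mono hg hd) (weightedSquares_mono hh hd)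

theorem mem_certCone_of_coeff_nonneg {p : ℝ[X]} {kg kh d : ℕ} (hp : ∀ n, 0 ≤ p.coeff n)
    (hd : p.natDegree ≤ d) : p ∈ certCone kg kh d :=
  AddSubmonoid.subset_closure <| Or.inl ⟨1, p, by simp, hp, by simp, hd⟩

theorem mul_mem_certCone {c p : ℝ[X]} {kg kh d kg' kh' d' : ℕ}
    (h₁ : ∀ f ∈ weightedSquares 1 kg d, c * f ∈ certCone kg' kh' d')
    (h₂ : ∀ f ∈ weightedSquares (1 - X) kh d, c * f ∈ certCone kg' kh' d')
    (hp : p ∈ certCone kg kh d) : c * p ∈ certCone kg' kh' d' :=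
  (AddSubmonoid.closure_le (S := (certCone kg' kh' d').comap (AddMonoidHom.mulLeft c))).mpr
    (union_subset h₁ h₂) hp

theorem natDegree_one_sub_X : (1 - X : ℝ[X]).natDegree = 1 := by
  rw [← neg_sub, natDegree_neg, ← C_1, natDegree_X_sub_C]

theorem one_sub_X_ne_zero : (1 - X : ℝ[X]) ≠ 0 :=
  ne_zero_of_natDegree_gt (n := 0) (natDegree_one_sub_X ▸ one_pos)

theorem X_pow_mul_mem_weightedSquares {w f : ℝ[X]} {k d : ℕ} (t : ℕ)
    (hf : f ∈ weightedSquares w k d) : X ^ t * f ∈ weightedSquares w k (d + t) := by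
  obtain ⟨g, q, hg, hq, rfl, hd⟩ := hf
  refine ⟨g, X ^ t * q, hg, fun n => ?_, by ring, ?_⟩
  · rw [coeff_X_pow_mul']
    split_ifs
    exacts [hq _, le_rfl]
  · exact natDegree_mul_le.trans (by rw [natDegree_X_pow]; omega)

theorem sq_mul_mem_weightedSquares {w f : ℝ[X]} {k d : ℕ} (c : ℝ[X])
    (hf : f ∈ weightedSquares w k d) :
    c ^ 2 * f ∈ weightedSquares w (k + c.natDegree) (d + 2 * c.natDegree) := by
  obtain ⟨g, q, hg, hq, rfl, hd⟩ := hf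
  refine ⟨c * g, q, natDegree_mul_le.trans (by omega), hq, by ring, ?_⟩
  exact natDegree_mul_le.trans (by have := natDegree_pow_le (p := c) (n := 2); omega)

theorem one_sub_X_mul_mem_weightedSquares_one {f : ℝ[X]} {k d : ℕ}
    (hf : f ∈ weightedSquares 1 k d) : (1 - X) * f ∈ weightedSquares (1 - X) k (d + 1) := by
  obtain ⟨g, q, hg, hq, rfl, hd⟩ := hf
  refine ⟨g, q, hg, hq, by ring, natDegree_mul_le.trans ?_⟩
  rw [natDegree_one_sub_X]
  omega

theorem one_sub_X_mul_mem_weightedSquares_one_sub_X {f : ℝ[X]} {k d : ℕ}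
    (hf : f ∈ weightedSquares (1 - X) k d) : (1 - X) * f ∈ weightedSquares 1 (k + 1) (d + 1) := by
  obtain ⟨g, q, hg, hq, rfl, hd⟩ := hf
  refine ⟨(1 - X) * g, q, natDegree_mul_le.trans ?_, hq, by ring, natDegree_mul_le.trans ?_⟩ <;>
  · rw [natDegree_one_sub_X]
    omega

theorem X_pow_mul_mem_certCone {p : ℝ[X]} {kg kh d : ℕ} (t : ℕ) (hp : p ∈ certCone kg kh d) :
    X ^ t * p ∈ certCone kg kh (d + t) :=
  mul_mem_certCone
    (fun _ hf => AddSubmonoid.subset_closure (Or.inl (X_pow_mul_mem_weightedSquares t hf)))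
    (fun _ hf => AddSubmonoid.subset_closure (Or.inr (X_pow_mul_mem_weightedSquares t hf))) hp

theorem sq_mul_mem_certCone {p : ℝ[X]} {kg kh d : ℕ} (c : ℝ[X]) (hp : p ∈ certCone kg kh d) :
    c ^ 2 * p ∈ certCone (kg + c.natDegree) (kh + c.natDegree) (d + 2 * c.natDegree) :=
  mul_mem_certCone
    (fun _ hf => AddSubmonoid.subset_closure (Or.inl (sq_mul_mem_weightedSquares c hf)))
    (fun _ hf => AddSubmonoid.subset_closure (Or.inr (sq_mul_mem_weightedSquares c hf))) hp

theorem one_sub_X_mul_mem_certCone {p : ℝ[X]} {kg kh d : ℕ} (hp : p ∈ certCone kg kh d) :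
    (1 - X) * p ∈ certCone (kh + 1) kg (d + 1) :=
  mul_mem_certCone
    (fun _ hf => AddSubmonoid.subset_closure (Or.inr (one_sub_X_mul_mem_weightedSquares_one hf)))
    (fun _ hf => AddSubmonoid.subset_closure
      (Or.inl (one_sub_X_mul_mem_weightedSquares_one_sub_X hf))) hp

theorem exists_fin_sum_of_mem_closure_weightedSquares {w f : ℝ[X]} {k d : ℕ}
    (hf : f ∈ AddSubmonoid.closure (weightedSquares w k d)) :
    ∃ (M : ℕ) (g q : Fin M → ℝ[X]), (∀ i, (g i).natDegree ≤ k) ∧ (∀ i n, 0 ≤ (q i).coeff n) ∧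
      (∀ i, (w * (g i ^ 2 * q i)).natDegree ≤ d) ∧ f = w * ∑ i, g i ^ 2 * q i := by
  obtain ⟨l, hl, rfl⟩ := AddSubmonoid.exists_list_of_mem_closure hf
  have hmem : ∀ i : Fin l.length, l[(i : ℕ)] ∈ weightedSquares w k d :=
    fun i => hl _ (l.getElem_mem _)
  choose g q hg hq heq hd using hmem
  refine ⟨l.length, g, q, hg, hq, fun i => heq i ▸ hd i, ?_⟩
  rw [mul_sum, ← List.sum_ofFn]
  simp_rw [← heq]
  rw [List.ofFn_getElem]

theorem sign_coeff_sub_C_mul_X_pow {p : ℝ[X]} {c : ℝ} {j : ℕ} (hc : 0 ≤ c) (hj : p.coeff j < 0)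
    (n : ℕ) : SignType.sign ((p - C c * X ^ j).coeff n) = SignType.sign (p.coeff n) := by
  rw [coeff_sub, coeff_C_mul_X_pow]
  split_ifs with h
  · subst h
    rw [sign_neg hj, sign_neg (by linarith)]
  · rw [sub_zero]

-- The uneven split `⌈V / 2⌉`, `⌊V / 2⌋` of the budget is what survives multiplication by `1 - X`,
-- which swaps the two sums.
def HasCert (p : ℝ[X]) : Prop :=
  p ∈ certCone ((p.signVariations + 1) / 2) (p.signVariations / 2) p.natDegree

theorem natDegree_sub_C_mul_X_pow {p : ℝ[X]} {c : ℝ} {j : ℕ} (hc : 0 ≤ c) (hj : p.coeff j < 0) :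
    (p - C c * X ^ j).natDegree = p.natDegree := by
  simp only [natDegree, degree, support_eq_of_sign_coeff_eq (sign_coeff_sub_C_mul_X_pow hc hj)]

theorem hasCert_of_coeff_nonneg {p : ℝ[X]} (hp : ∀ n, 0 ≤ p.coeff n) : HasCert p :=
  mem_certCone_of_coeff_nonneg hp le_rfl

theorem HasCert.X_pow_mul {q : ℝ[X]} (hq0 : q ≠ 0) (hq : HasCert q) (t : ℕ) :
    HasCert (X ^ t * q) := by
  rw [HasCert, signVariations_X_pow_mul, natDegree_X_pow_mul hq0 (n := t)]
  exact X_pow_mul_mem_certCone t hq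

theorem HasCert.one_sub_X_mul {r : ℝ[X]} (hr0 : r ≠ 0) (hr : HasCert r) :
    HasCert ((1 - X) * r) := by
  have hsv : r.signVariations + 1 ≤ ((1 - X) * r).signVariations := by
    have := succ_signVariations_le_X_sub_C_mul one_pos hr0
    rwa [← signVariations_neg ((X - C 1) * r), ← neg_mul, neg_sub, C_1] at this
  have hdeg : ((1 - X) * r).natDegree = r.natDegree + 1 := by
    rw [natDegree_mul one_sub_X_ne_zero hr0, natDegree_one_sub_X, add_comm]
  rw [HasCert, hdeg]
  exact certCone_mono (by omega) (by omega) le_rfl (one_sub_X_mul_mem_certCone hr)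

theorem HasCert.X_sub_C_sq_mul {q : ℝ[X]} {x₀ : ℝ} (hx₀ : 0 < x₀) (hq0 : q ≠ 0) (hq : HasCert q) :
    HasCert ((X - C x₀) ^ 2 * q) := by
  have hsv : q.signVariations + 2 ≤ ((X - C x₀) ^ 2 * q).signVariations := by
    have h₁ := succ_signVariations_le_X_sub_C_mul hx₀ hq0
    have h₂ := succ_signVariations_le_X_sub_C_mul hx₀ (mul_ne_zero (X_sub_C_ne_zero x₀) hq0)
    rw [sq, mul_assoc]
    omega
  have hdeg : ((X - C x₀) ^ 2 * q).natDegree = q.natDegree + 2 := by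
    rw [natDegree_mul (pow_ne_zero 2 (X_sub_C_ne_zero x₀)) hq0, natDegree_pow, natDegree_X_sub_C,
      add_comm]
  have hmem := sq_mul_mem_certCone (X - C x₀) hq
  rw [natDegree_X_sub_C] at hmem
  rw [HasCert, hdeg]
  exact certCone_mono (by omega) (by omega) le_rfl hmem

theorem HasCert.of_sub_monomial {p : ℝ[X]} {c : ℝ} {j : ℕ}
    (h : HasCert (p - C c * X ^ j)) (hc : 0 ≤ c) (hj : p.coeff j < 0) : HasCert p := by
  have hmono : (C c * X ^ j).natDegree ≤ p.natDegree :=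
    natDegree_C_mul_X_pow_le c j |>.trans (le_natDegree_of_ne_zero hj.ne)
  rw [HasCert, signVariations_congr (sign_coeff_sub_C_mul_X_pow hc hj),
    natDegree_sub_C_mul_X_pow hc hj] at h
  have hmon : C c * X ^ j ∈ certCone ((p.signVariations + 1) / 2) (p.signVariations / 2)
      p.natDegree := mem_certCone_of_coeff_nonneg (fun n => by
        rw [coeff_C_mul_X_pow]; split_ifs <;> simp [hc]) hmono
  simpa [HasCert] using add_mem h hmon

theorem HasCert.of_isRoot {p : ℝ[X]}
    (ih : ∀ q : ℝ[X], q.natDegree < p.natDegree → (∀ x ∈ Icc (0 : ℝ) 1, 0 ≤ q.eval x) → HasCert q)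
    (hp : p ≠ 0) (hpos : ∀ x ∈ Icc (0 : ℝ) 1, 0 ≤ p.eval x) {x₀ : ℝ} (hx₀ : x₀ ∈ Icc (0 : ℝ) 1)
    (hroot : p.IsRoot x₀) : HasCert p := by
  obtain ⟨c, q, rfl, hcdeg, hc_nonneg, hcert⟩ : ∃ c q : ℝ[X], p = c * q ∧ 0 < c.natDegree ∧
      (∀ x ∈ Ioo (0 : ℝ) 1, 0 ≤ c.eval x) ∧ (q ≠ 0 → HasCert q → HasCert (c * q)) := by
    rcases hx₀.1.eq_or_lt with rfl | h₀
    · obtain ⟨q, hq⟩ : X ^ 1 ∣ p := X_pow_dvd_iff.mpr fun d hd => by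
        rwa [Nat.lt_one_iff.mp hd, coeff_zero_eq_eval_zero]
      exact ⟨X ^ 1, q, hq, by simp, fun x hx => by simpa using hx.1.le,
        fun hq0 h => h.X_pow_mul hq0 1⟩
    rcases hx₀.2.eq_or_lt with rfl | h₁
    · obtain ⟨s, rfl⟩ := dvd_iff_isRoot.mpr hroot
      exact ⟨1 - X, -s, by rw [C_1]; ring, by rw [natDegree_one_sub_X]; exact one_pos,
        fun x hx => by simpa using hx.2.le, fun hq0 h => h.one_sub_X_mul hq0⟩
    · have hmin : IsLocalMin p.eval x₀ := Filter.eventually_of_mem (Icc_mem_nhds h₀ h₁)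
        fun y hy => by simpa [hroot.eq_zero] using hpos y hy
      obtain ⟨q, rfl⟩ := X_sub_C_sq_dvd_of_isLocalMin hmin hroot
      exact ⟨(X - C x₀) ^ 2, q, rfl, by simp, fun x _ => by simpa using sq_nonneg (x - x₀),
        fun hq0 h => h.X_sub_C_sq_mul h₀ hq0⟩
  have hc : c ≠ 0 := ne_zero_of_natDegree_gt hcdeg
  have hq : q ≠ 0 := right_ne_zero_of_mul hp
  refine hcert hq (ih q ?_ (nonneg_on_Icc_of_mul_nonneg one_pos hc hc_nonneg hpos))
  rw [natDegree_mul hc hq]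
  omega

theorem hasCert_of_nonneg_on_Icc (p : ℝ[X]) (hpos : ∀ x ∈ Icc (0 : ℝ) 1, 0 ≤ p.eval x) :
    HasCert p := by
  induction hn : p.natDegree using Nat.strong_induction_on generalizing p with
  | _ n ih =>
  subst hn
  by_cases hnn : ∀ n, 0 ≤ p.coeff n
  · exact hasCert_of_coeff_nonneg hnn
  push Not at hnn
  obtain ⟨j, hj⟩ := hnn
  have hp : p ≠ 0 := by rintro rfl; simp at hj
  have hlower : ∀ q : ℝ[X], q.natDegree < p.natDegree → (∀ x ∈ Icc (0 : ℝ) 1, 0 ≤ q.eval x) →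
      HasCert q := fun q hq hqpos => ih _ hq q hqpos rfl
  by_cases hroot : ∃ x₀ ∈ Icc (0 : ℝ) 1, p.IsRoot x₀
  · obtain ⟨x₀, hx₀, hroot⟩ := hroot
    exact HasCert.of_isRoot hlower hp hpos hx₀ hroot
  push Not at hroot
  obtain ⟨c, hc, hpos', x₀, hx₀, hroot'⟩ :=
    exists_sub_monomial_nonneg_isRoot j fun x hx => (hpos x hx).lt_of_ne' (hroot x hx)
  have hp' : p - C c * X ^ j ≠ 0 := fun h => by
    simpa [h, sign_neg hj] using sign_coeff_sub_C_mul_X_pow hc hj j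
  have hlower' := natDegree_sub_C_mul_X_pow hc hj ▸ hlower
  exact (HasCert.of_isRoot hlower' hp' hpos' hx₀ hroot').of_sub_monomial hc hj

end SparsePositivstellensatz

open SparsePositivstellensatz in
theorem stmt_1 (k d : ℕ) (p : ℝ[X]) (hdeg : p.natDegree = d)
    (hsupp : p.support.card ≤ 2 * k + 1)
    (hpos : ∀ x ∈ Set.Icc (0 : ℝ) 1, 0 ≤ p.eval x) :
    ∃ (M N : ℕ) (g pp : Fin M → ℝ[X]) (h q : Fin N → ℝ[X]),
      (∀ i, (g i).natDegree ≤ k) ∧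
      (∀ j, (h j).natDegree ≤ k) ∧
      (∀ i, ∀ c, 0 ≤ (pp i).coeff c) ∧
      (∀ j, ∀ c, 0 ≤ (q j).coeff c) ∧
      (∀ i, (g i ^ 2 * pp i).natDegree ≤ d) ∧
      (∀ j, ((1 - X) * (h j ^ 2 * q j)).natDegree ≤ d) ∧
      p = (∑ i, g i ^ 2 * pp i) + (1 - X) * ∑ j, h j ^ 2 * q j := by
  subst hdeg
  have hsv : p.signVariations ≤ 2 * k :=
    (signVariations_le_card_support_sub_one p).trans (by omega)
  have hcert : p ∈ certCone k k p.natDegree :=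
    certCone_mono (by omega) (by omega) le_rfl (hasCert_of_nonneg_on_Icc p hpos)
  rw [certCone, AddSubmonoid.closure_union, AddSubmonoid.mem_sup] at hcert
  obtain ⟨a, ha, b, hb, rfl⟩ := hcert
  obtain ⟨M, g, pp, hg, hpp, hgd, rfl⟩ := exists_fin_sum_of_mem_closure_weightedSquares ha
  obtain ⟨N, h, q, hh, hq, hhd, rfl⟩ := exists_fin_sum_of_mem_closure_weightedSquares hb
  exact ⟨M, N, g, pp, h, q, hg, hh, hpp, hq, fun i => by simpa using hgd i, hhd, by rw [one_mul]⟩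
end

section
/- Let V ⊂ ℝ[t] be a finite-dimensional linear subspace, I ⊆ ℝ a non-degenerate closed interval, and P = {f ∈ V : f ≥ 0 on I}, a closed pointed convex cone. For 0 ≠ f ∈ P, if I is compact then the linear span of the supporting face of f in P equals W_f = {g ∈ V : ord_s(g) ≥ ord_s(f) for all s ∈ I}, where ord_s denotes the order of vanishing at s. -/
open Polynomial

/-! The polynomials `g ∈ P` dominated by `f` (`c • f - g ∈ P` for some `c`) form a face
containing `f`, hence contain the supporting face. If `g` and `c • f - g` are both nonnegative on
`I` but `g` vanished at `s ∈ I` to lower order than `f`, the two would have the same order at `s`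
with opposite lowest coefficients; nonnegativity at points of `I` arbitrarily close to `s` forces
these coefficients to have the same sign. Conversely, for `g ∈ W_f` the quotient `g / f` extends
continuously to the compact interval `I`, hence `f ± ε g ∈ P` for small `ε > 0`; both lie in the
supporting face because their sum `2 f` does, and `g` is a multiple of their difference. -/

/-- A face of a convex cone `C`: a subcone `F ⊆ C` such that whenever a sum of two
elements of `C` lies in `F`, both summands lie in `F`. -/
def IsFace (C F : Set (Polynomial ℝ)) : Prop :=
  F ⊆ C ∧ (∀ c : ℝ, 0 ≤ c → ∀ x ∈ F, c • x ∈ F) ∧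
    (∀ x ∈ F, ∀ y ∈ F, x + y ∈ F) ∧
    ∀ x ∈ C, ∀ y ∈ C, x + y ∈ F → x ∈ F ∧ y ∈ F

/-- The supporting face of `f` in `C`: the smallest face of `C` containing `f`. -/
def IsSupportingFace (C : Set (Polynomial ℝ)) (f : Polynomial ℝ)
    (F : Set (Polynomial ℝ)) : Prop :=
  IsFace C F ∧ f ∈ F ∧ ∀ F', IsFace C F' → f ∈ F' → F ⊆ F'

def dominatedBy (C : PointedCone ℝ ℝ[X]) (f : ℝ[X]) : Set ℝ[X] :=
  {g | g ∈ C ∧ ∃ c : ℝ, c • f - g ∈ C}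

lemma isFace_dominatedBy (C : PointedCone ℝ ℝ[X]) (f : ℝ[X]) : IsFace C (dominatedBy C f) := by
  refine ⟨fun g hg => hg.1, ?_, ?_, ?_⟩
  · rintro c hc x ⟨hx, d, hd⟩
    refine ⟨C.smul_mem hc hx, c * d, ?_⟩
    convert C.smul_mem hc hd using 1
    rw [smul_sub, mul_smul]
  · rintro x ⟨hx, d₁, hd₁⟩ y ⟨hy, d₂, hd₂⟩
    refine ⟨C.add_mem hx hy, d₁ + d₂, ?_⟩
    convert C.add_mem hd₁ hd₂ using 1
    rw [add_smul]; abel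
  · rintro x hx y hy ⟨-, d, hd⟩
    refine ⟨⟨hx, d, ?_⟩, ⟨hy, d, ?_⟩⟩
    · convert C.add_mem hd hy using 1; abel
    · convert C.add_mem hd hx using 1; abel

lemma IsSupportingFace.subset_dominatedBy {C : PointedCone ℝ ℝ[X]} {f : ℝ[X]} {F : Set ℝ[X]}
    (hF : IsSupportingFace C f F) : F ⊆ dominatedBy C f := by
  have hfC : f ∈ C := hF.1.1 hF.2.1
  refine hF.2.2 _ (isFace_dominatedBy C f) ⟨hfC, 2, ?_⟩
  rwa [two_smul, add_sub_cancel_right]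

lemma IsFace.mem_span_of_add_smul_mem {C F : Set ℝ[X]} (hF : IsFace C F) {f g : ℝ[X]}
    (hf : f ∈ F) {t : ℝ} (ht : t ≠ 0) (hadd : f + t • g ∈ C) (hsub : f - t • g ∈ C) :
    g ∈ Submodule.span ℝ F := by
  have hsum : f + t • g + (f - t • g) ∈ F := by
    rw [add_add_sub_cancel]
    exact hF.2.2.1 f hf f hf
  have hadd' : f + t • g ∈ F := (hF.2.2.2 _ hadd _ hsub hsum).1
  refine (Submodule.smul_mem_iff _ ht).1 ?_
  simpa using sub_mem (Submodule.subset_span hadd') (Submodule.subset_span hf)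

def nonnegCone (V : Submodule ℝ ℝ[X]) (K : Set ℝ) : PointedCone ℝ ℝ[X] where
  carrier := {g | g ∈ V ∧ ∀ x ∈ K, 0 ≤ g.eval x}
  add_mem' hg hh := ⟨V.add_mem hg.1 hh.1, fun x hx => by
    simpa using add_nonneg (hg.2 x hx) (hh.2 x hx)⟩
  zero_mem' := ⟨V.zero_mem, by simp⟩
  smul_mem' := by
    rintro ⟨c, hc⟩ g hg
    rw [Nonneg.mk_smul]
    exact ⟨V.smul_mem c hg.1, fun x hx => by simpa using mul_nonneg hc (hg.2 x hx)⟩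

def vanishingSubmodule (V : Submodule ℝ ℝ[X]) (K : Set ℝ) (f : ℝ[X]) : Submodule ℝ ℝ[X] where
  carrier := {g | g ∈ V ∧ ∀ s ∈ K, (X - C s) ^ rootMultiplicity s f ∣ g}
  add_mem' hg hh := ⟨V.add_mem hg.1 hh.1, fun s hs => dvd_add (hg.2 s hs) (hh.2 s hs)⟩
  zero_mem' := ⟨V.zero_mem, fun _ _ => dvd_zero _⟩
  smul_mem' c g hg := ⟨V.smul_mem c hg.1, fun s hs => by
    rw [smul_eq_C_mul]; exact dvd_mul_of_dvd_right (hg.2 s hs) _⟩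

lemma mem_closure_Icc_diff_singleton {a b s : ℝ} (hab : a < b) (hs : s ∈ Set.Icc a b) :
    s ∈ closure (Set.Icc a b \ {s}) := by
  rw [← closure_Ioo hab.ne] at hs
  have hIoo : Set.Ioo a b ⊆ closure (Set.Ioo a b ∩ {s}ᶜ) :=
    (dense_compl_singleton s).open_subset_closure_inter isOpen_Ioo
  exact closure_mono (Set.inter_subset_inter_left _ Set.Ioo_subset_Icc_self)
    (closure_minimal hIoo isClosed_closure hs)

lemma eval_mul_eval_nonneg_of_pow_mul_nonneg {K : Set ℝ} {s : ℝ} (hs : s ∈ closure (K \ {s}))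
    {k : ℕ} {q r : ℝ[X]} (hq : ∀ x ∈ K, 0 ≤ ((X - C s) ^ k * q).eval x)
    (hr : ∀ x ∈ K, 0 ≤ ((X - C s) ^ k * r).eval x) : 0 ≤ q.eval s * r.eval s := by
  have hclosed : IsClosed {x | 0 ≤ q.eval x * r.eval x} :=
    isClosed_le continuous_const (q.continuous.mul r.continuous)
  refine closure_minimal ?_ hclosed hs
  rintro x ⟨hxK, hxs : x ≠ s⟩
  have hpos : 0 < ((x - s) ^ k) ^ 2 := by
    have : x - s ≠ 0 := sub_ne_zero.2 hxs
    positivity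
  have hprod := mul_nonneg (hq x hxK) (hr x hxK)
  simp only [eval_mul, eval_pow, eval_sub, eval_X, eval_C] at hprod
  refine (mul_nonneg_iff_of_pos_left hpos).1 ?_
  linarith

lemma pow_dvd_of_pow_dvd_add {K : Set ℝ} {s : ℝ} (hs : s ∈ closure (K \ {s})) {m : ℕ}
    {g h : ℝ[X]} (hg : ∀ x ∈ K, 0 ≤ g.eval x) (hh : ∀ x ∈ K, 0 ≤ h.eval x)
    (hdvd : (X - C s) ^ m ∣ g + h) : (X - C s) ^ m ∣ g := by
  by_contra hgm
  have hg0 : g ≠ 0 := by rintro rfl; exact hgm (dvd_zero _)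
  set k := rootMultiplicity s g
  have hkm : k < m := not_le.1 fun hmk =>
    hgm ((pow_dvd_pow _ hmk).trans (pow_rootMultiplicity_dvd g s))
  set g₁ := g /ₘ (X - C s) ^ k
  have hg₁ : g₁.eval s ≠ 0 := eval_divByMonic_pow_rootMultiplicity_ne_zero s hg0
  have hgk : g = (X - C s) ^ k * g₁ := (pow_mul_divByMonic_rootMultiplicity_eq g s).symm
  obtain ⟨u, hu⟩ : (X - C s) ^ (k + 1) ∣ g + h := (pow_dvd_pow _ hkm).trans hdvd
  have hhk : h = (X - C s) ^ k * ((X - C s) * u - g₁) := by linear_combination hu - hgk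
  have hprod := eval_mul_eval_nonneg_of_pow_mul_nonneg hs (by rwa [← hgk]) (by rwa [← hhk])
  simp only [eval_sub, eval_mul, eval_X, eval_C, sub_self, zero_mul, zero_sub, mul_neg,
    Left.nonneg_neg_iff] at hprod
  exact hg₁ (mul_self_eq_zero.1 (le_antisymm hprod (mul_self_nonneg _)))

lemma exists_mul_eq_forall_not_isRoot {R : Type*} [CommRing R] [IsDomain R] {f : R[X]}
    (hf : f ≠ 0) (K : Set R) :
    ∃ p q : R[X], f = p * q ∧ (∀ s ∈ K, ¬ q.IsRoot s) ∧
      ∀ g : R[X], (∀ s ∈ K, (X - C s) ^ rootMultiplicity s f ∣ g) → p ∣ g := by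
  classical
  set S := f.roots.filter (· ∈ K)
  obtain ⟨q, hq⟩ : (S.map fun a => X - C a).prod ∣ f :=
    (Multiset.prod_X_sub_C_dvd_iff_le_roots hf S).2 (Multiset.filter_le _ _)
  refine ⟨_, q, hq, fun s hs hqs => ?_, fun g hg => ?_⟩
  · have hq0 : q ≠ 0 := by rintro rfl; exact hf (by simpa using hq)
    have hcount := congrArg (Multiset.count s) (congrArg roots hq)
    rw [roots_mul (hq ▸ hf), roots_multiset_prod_X_sub_C, Multiset.count_add,
      Multiset.count_filter_of_pos hs, count_roots q] at hcount
    have hpos := (rootMultiplicity_pos hq0).2 hqs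
    omega
  · rcases eq_or_ne g 0 with rfl | hg0
    · exact dvd_zero _
    refine (Multiset.prod_X_sub_C_dvd_iff_le_roots hg0 S).2 (Multiset.le_iff_count.2 fun s => ?_)
    rw [Multiset.count_filter, count_roots, count_roots]
    split_ifs with hs
    · exact (le_rootMultiplicity_iff hg0).2 (hg s hs)
    · exact Nat.zero_le _

lemma exists_pos_mul_abs_eval_le {K : Set ℝ} (hK : IsCompact K) {f g : ℝ[X]} (hf0 : f ≠ 0)
    (hf : ∀ x ∈ K, 0 ≤ f.eval x) (hg : ∀ s ∈ K, (X - C s) ^ rootMultiplicity s f ∣ g) :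
    ∃ ε > 0, ∀ x ∈ K, ε * |g.eval x| ≤ f.eval x := by
  obtain ⟨p, q, hpq, hq, hp⟩ := exists_mul_eq_forall_not_isRoot hf0 K
  obtain ⟨r, rfl⟩ := hp g hg
  obtain ⟨M, hM⟩ := hK.exists_bound_of_continuousOn (f := fun x => r.eval x / q.eval x)
    (r.continuous.continuousOn.div q.continuous.continuousOn hq)
  refine ⟨(max M 1)⁻¹, by positivity, fun x hx => ?_⟩
  have hqx : 0 < |q.eval x| := abs_pos.2 (hq x hx)
  have hrx : |r.eval x| ≤ max M 1 * |q.eval x| := by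
    have hMx := hM x hx
    rw [Real.norm_eq_abs, abs_div, div_le_iff₀ hqx] at hMx
    exact hMx.trans (mul_le_mul_of_nonneg_right (le_max_left _ _) hqx.le)
  calc (max M 1)⁻¹ * |(p * r).eval x| ≤ |p.eval x| * |q.eval x| := by
        rw [inv_mul_le_iff₀ (by positivity), eval_mul, abs_mul, mul_left_comm]
        exact mul_le_mul_of_nonneg_left hrx (abs_nonneg _)
    _ = f.eval x := by rw [← abs_mul, ← eval_mul, ← hpq, abs_of_nonneg (hf x hx)]

lemma mem_vanishingSubmodule_of_mem_dominatedBy {V : Submodule ℝ ℝ[X]} {a b : ℝ} (hab : a < b)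
    {f g : ℝ[X]} (hg : g ∈ dominatedBy (nonnegCone V (Set.Icc a b)) f) :
    g ∈ vanishingSubmodule V (Set.Icc a b) f := by
  obtain ⟨⟨hgV, hgI⟩, c, -, hcI⟩ := hg
  refine ⟨hgV, fun s hs =>
    pow_dvd_of_pow_dvd_add (mem_closure_Icc_diff_singleton hab hs) hgI hcI ?_⟩
  rw [add_sub_cancel, smul_eq_C_mul]
  exact dvd_mul_of_dvd_right (pow_rootMultiplicity_dvd f s) _

lemma vanishingSubmodule_le_span {V : Submodule ℝ ℝ[X]} {a b : ℝ} {f : ℝ[X]} (hf0 : f ≠ 0)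
    {F : Set ℝ[X]} (hF : IsSupportingFace (nonnegCone V (Set.Icc a b)) f F) :
    vanishingSubmodule V (Set.Icc a b) f ≤ Submodule.span ℝ F := by
  rintro g ⟨hgV, hg⟩
  obtain ⟨hfV, hfI⟩ := hF.1.1 hF.2.1
  obtain ⟨ε, hε, hεg⟩ := exists_pos_mul_abs_eval_le isCompact_Icc hf0 hfI hg
  have hbound (x) (hx : x ∈ Set.Icc a b) := abs_le.1 <| show |ε * g.eval x| ≤ f.eval x by
    rw [abs_mul, abs_of_pos hε]; exact hεg x hx
  refine hF.1.mem_span_of_add_smul_mem hF.2.1 hε.ne'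
    ⟨V.add_mem hfV (V.smul_mem ε hgV), fun x hx => ?_⟩
    ⟨V.sub_mem hfV (V.smul_mem ε hgV), fun x hx => ?_⟩ <;>
  · simp only [eval_add, eval_sub, eval_smul, smul_eq_mul]
    linarith [hbound x hx]

theorem stmt_2_general (V : Submodule ℝ (Polynomial ℝ))
    (a b : ℝ) (hab : a < b) (f : ℝ[X]) (hf0 : f ≠ 0)
    (F : Set ℝ[X])
    (hF : IsSupportingFace
      {g : ℝ[X] | g ∈ V ∧ ∀ x ∈ Set.Icc a b, 0 ≤ g.eval x} f F) :
    (Submodule.span ℝ F : Set ℝ[X]) =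
      {g : ℝ[X] | g ∈ V ∧ ∀ s ∈ Set.Icc a b,
        (X - C s) ^ (rootMultiplicity s f) ∣ g} := by
  change IsSupportingFace (nonnegCone V (Set.Icc a b)) f F at hF
  change _ = (vanishingSubmodule V (Set.Icc a b) f : Set ℝ[X])
  refine congrArg _ (le_antisymm ?_ (vanishingSubmodule_le_span hf0 hF))
  exact Submodule.span_le.2 fun g hg =>
    mem_vanishingSubmodule_of_mem_dominatedBy hab (hF.subset_dominatedBy hg)

theorem stmt_2 (V : Submodule ℝ (Polynomial ℝ)) [FiniteDimensional ℝ V]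
    (a b : ℝ) (hab : a < b) (f : ℝ[X]) (hfV : f ∈ V) (hf0 : f ≠ 0)
    (hfP : ∀ x ∈ Set.Icc a b, 0 ≤ f.eval x) (F : Set ℝ[X])
    (hF : IsSupportingFace
      {g : ℝ[X] | g ∈ V ∧ ∀ x ∈ Set.Icc a b, 0 ≤ g.eval x} f F) :
    (Submodule.span ℝ F : Set ℝ[X]) =
      {g : ℝ[X] | g ∈ V ∧ ∀ s ∈ Set.Icc a b,
        (X - C s) ^ (rootMultiplicity s f) ∣ g} :=
  stmt_2_general V a b hab f hf0 F hF
end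

section
/- Let I ⊂ ℝ be a compact non-degenerate interval, V ⊂ ℝ[t] a finite-dimensional subspace, and P = {f ∈ V : f ≥ 0 on I}. If f ∈ V spans an extreme ray of P, then f has at least dim(V) − 1 roots in I, counted with multiplicity. -/
open Polynomial

theorem stmt_4 (V : Submodule ℝ (Polynomial ℝ)) [FiniteDimensional ℝ V]
    (a b : ℝ) (hab : a < b) (f : ℝ[X]) (hfV : f ∈ V) (hf0 : f ≠ 0)
    (hface : IsFace {g : ℝ[X] | g ∈ V ∧ ∀ x ∈ Set.Icc a b, 0 ≤ g.eval x}
      {g : ℝ[X] | ∃ c : ℝ, 0 ≤ c ∧ g = c • f}) :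
    Module.finrank ℝ V - 1 ≤
      Multiset.card (f.roots.filter (fun x => a ≤ x ∧ x ≤ b)) := by
  classical
  by_contra hlt
  push_neg at hlt
  set M : Multiset ℝ := f.roots.filter (fun x => a ≤ x ∧ x ≤ b) with hM
  set n := Module.finrank ℝ V with hn
  set k := Multiset.card M with hk
  have hk2 : k + 2 ≤ n := by omega
  set p : ℝ[X] := (M.map fun r => X - C r).prod with hp
  have hpm : p.Monic := monic_multiset_prod_of_monic _ _ fun a _ => monic_X_sub_C a
  have hpdeg : p.natDegree = k := by
    rw [hp, natDegree_multiset_prod_X_sub_C_eq_card]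
  have hpdvd : p ∣ f :=
    (Multiset.prod_X_sub_C_dvd_iff_le_roots hf0 M).2 (Multiset.filter_le _ _)
  -- the mod-by-p linear map
  let φ : V →ₗ[ℝ] ℝ[X] := (modByMonicHom p).comp V.subtype
  have hφ : ∀ g : V, φ g = (g : ℝ[X]) %ₘ p := fun g => rfl
  have hrange : LinearMap.range φ ≤ degreeLT ℝ k := by
    rintro - ⟨g, rfl⟩
    rw [mem_degreeLT, hφ]
    calc degree ((g : ℝ[X]) %ₘ p) < degree p := degree_modByMonic_lt _ hpm
      _ ≤ (k : WithBot ℕ) := by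
        rw [degree_eq_natDegree hpm.ne_zero, hpdeg]
  have hFDdeg : FiniteDimensional ℝ (degreeLT ℝ k) :=
    Module.Finite.equiv (degreeLTEquiv ℝ k).symm
  have hdegLT : Module.finrank ℝ (degreeLT ℝ k) = k := by
    rw [(degreeLTEquiv ℝ k).finrank_eq]
    simp
  have hrk : Module.finrank ℝ (LinearMap.range φ) ≤ k := by
    have := Submodule.finrank_mono hrange
    omega
  have hker : 2 ≤ Module.finrank ℝ (LinearMap.ker φ) := by
    have := LinearMap.finrank_range_add_finrank_ker φ
    omega
  -- the subspace of V of polynomials divisible by p, as a submodule of ℝ[X]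
  set W : Submodule ℝ ℝ[X] := (LinearMap.ker φ).map V.subtype with hW
  have hWrank : 2 ≤ Module.finrank ℝ W := by
    rw [hW, Submodule.finrank_map_subtype_eq]; exact hker
  have hWmem : ∀ g ∈ W, g ∈ V ∧ p ∣ g := by
    intro g hg
    obtain ⟨x, hx, rfl⟩ := hg
    refine ⟨x.2, ?_⟩
    have hx0 : φ x = 0 := hx
    rw [hφ] at hx0
    exact (modByMonic_eq_zero_iff_dvd hpm).1 hx0
  have hfW : f ∈ W := by
    refine ⟨⟨f, hfV⟩, ?_, rfl⟩
    show φ ⟨f, hfV⟩ = 0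
    rw [hφ]
    exact (modByMonic_eq_zero_iff_dvd hpm).2 hpdvd
  -- find g ∈ W not proportional to f
  obtain ⟨g, hgW, hgspan⟩ : ∃ g ∈ W, g ∉ Submodule.span ℝ {f} := by
    by_contra hcon
    push_neg at hcon
    have hle : W ≤ Submodule.span ℝ {f} := hcon
    have := Submodule.finrank_mono hle
    rw [finrank_span_singleton hf0] at this
    omega
  obtain ⟨hgV, h, hgh⟩ : g ∈ V ∧ ∃ h, g = p * h := by
    obtain ⟨h1, h2⟩ := hWmem g hgW
    exact ⟨h1, h2⟩
  -- f is nonnegative on [a,b]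
  have hfC : f ∈ V ∧ ∀ x ∈ Set.Icc a b, 0 ≤ f.eval x :=
    hface.1 ⟨1, zero_le_one, (one_smul ℝ f).symm⟩
  obtain ⟨q, hfq⟩ := hpdvd
  have hq0 : q ≠ 0 := by
    rintro rfl; rw [mul_zero] at hfq; exact hf0 hfq
  -- q has no roots in [a,b]
  have hqroots : ∀ x ∈ Set.Icc a b, q.eval x ≠ 0 := by
    intro x hx hx0
    have hxq : x ∈ q.roots := (mem_roots hq0).2 hx0
    have hfr : f.roots = M + q.roots := by
      rw [hfq, roots_mul (hfq ▸ hf0), hp, roots_multiset_prod_X_sub_C]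
    have h1 : M = M + q.roots.filter (fun x => a ≤ x ∧ x ≤ b) := by
      conv_lhs => rw [hM, hfr, Multiset.filter_add]
      congr 1
      rw [Multiset.filter_eq_self]
      intro r hr
      exact (Multiset.mem_filter.1 hr).2
    have h2 : x ∈ q.roots.filter (fun x => a ≤ x ∧ x ≤ b) :=
      Multiset.mem_filter.2 ⟨hxq, hx.1, hx.2⟩
    have h3 : Multiset.card M = Multiset.card M +
        Multiset.card (q.roots.filter (fun x => a ≤ x ∧ x ≤ b)) := by
      conv_lhs => rw [h1]
      rw [Multiset.card_add]
    have h5 : Multiset.card (q.roots.filter (fun x => a ≤ x ∧ x ≤ b)) = 0 := by omega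
    rw [Multiset.card_eq_zero] at h5
    rw [h5] at h2
    exact absurd h2 (Multiset.notMem_zero x)
  -- sign normalization
  have haI : a ∈ Set.Icc a b := Set.left_mem_Icc.2 hab.le
  set σ : ℝ := if 0 < q.eval a then 1 else -1 with hσ
  have hσσ : σ * σ = 1 := by
    rw [hσ]; split <;> norm_num
  set q' : ℝ[X] := C σ * q with hq'
  set p' : ℝ[X] := C σ * p with hp'
  set h' : ℝ[X] := C σ * h with hh'
  have hCσ : C σ * C σ = (1 : ℝ[X]) := by rw [← C_mul, hσσ, C_1]
  have hfq' : f = p' * q' := by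
    rw [hp', hq', show C σ * p * (C σ * q) = C σ * C σ * (p * q) from by ring,
      hCσ, one_mul]
    exact hfq
  have hgh' : g = p' * h' := by
    rw [hp', hh', show C σ * p * (C σ * h) = C σ * C σ * (p * h) from by ring,
      hCσ, one_mul]
    exact hgh
  have hq'a : 0 < q'.eval a := by
    rw [hq', eval_mul, eval_C, hσ]
    rcases lt_trichotomy 0 (q.eval a) with h1 | h1 | h1
    · rw [if_pos h1]; linarith
    · exact absurd h1.symm (hqroots a haI)
    · rw [if_neg (by linarith)]; nlinarith
  have hq'pos : ∀ x ∈ Set.Icc a b, 0 < q'.eval x := by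
    intro x hx
    by_contra hcon
    push_neg at hcon
    have hq'ne : q'.eval x ≠ 0 := by
      rw [hq', eval_mul, eval_C]
      intro hc
      rcases mul_eq_zero.1 hc with hc | hc
      · rw [hσ] at hc; revert hc; split <;> norm_num
      · exact hqroots x hx hc
    have hneg : q'.eval x < 0 := lt_of_le_of_ne hcon hq'ne
    have hIVT := intermediate_value_uIcc (a := a) (b := x)
      (f := fun y => q'.eval y) (Polynomial.continuousOn q')
    have h0mem : (0 : ℝ) ∈ Set.uIcc (q'.eval a) (q'.eval x) :=
      Set.mem_uIcc.2 (Or.inr ⟨hneg.le, hq'a.le⟩)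
    obtain ⟨y, hy, hy0⟩ := hIVT h0mem
    have hyI : y ∈ Set.Icc a b := by
      have : Set.uIcc a x ⊆ Set.Icc a b := by
        rw [Set.uIcc_of_le hx.1]
        exact Set.Icc_subset_Icc le_rfl hx.2
      exact this hy
    have : q'.eval y ≠ 0 := by
      rw [hq', eval_mul, eval_C]
      intro hc
      rcases mul_eq_zero.1 hc with hc | hc
      · rw [hσ] at hc; revert hc; split <;> norm_num
      · exact hqroots y hyI hc
    exact this hy0
  have hp'nonneg : ∀ x ∈ Set.Icc a b, 0 ≤ p'.eval x := by
    intro x hx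
    have h1 := hfC.2 x hx
    rw [hfq', eval_mul] at h1
    nlinarith [hq'pos x hx]
  -- choose ε
  obtain ⟨x₀, hx₀, hmin⟩ := isCompact_Icc.exists_isMinOn (Set.nonempty_Icc.2 hab.le)
    (Polynomial.continuousOn q' (s := Set.Icc a b))
  set m : ℝ := q'.eval x₀ with hm
  have hmpos : 0 < m := hq'pos x₀ hx₀
  obtain ⟨Cb, hCb⟩ := isCompact_Icc.exists_bound_of_continuousOn
    (Polynomial.continuousOn h' (s := Set.Icc a b))
  have hCb0 : 0 ≤ Cb := le_trans (norm_nonneg _) (hCb a haI)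
  set ε : ℝ := m / (Cb + 1) with hε
  have hεpos : 0 < ε := div_pos hmpos (by linarith)
  have hbracket : ∀ x ∈ Set.Icc a b, ε * |h'.eval x| < m := by
    intro x hx
    have h1 : |h'.eval x| ≤ Cb := hCb x hx
    calc ε * |h'.eval x| ≤ ε * Cb := by
          apply mul_le_mul_of_nonneg_left h1 hεpos.le
      _ < ε * (Cb + 1) := by nlinarith
      _ = m := by rw [hε]; field_simp
  have hmle : ∀ x ∈ Set.Icc a b, m ≤ q'.eval x := fun x hx => hmin hx
  -- f ± ε g are in the cone
  have hmem : ∀ s : ℝ, s = 1 ∨ s = -1 →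
      (f + (s * ε) • g) ∈ {g : ℝ[X] | g ∈ V ∧ ∀ x ∈ Set.Icc a b, 0 ≤ g.eval x} := by
    intro s hs
    constructor
    · exact V.add_mem hfV (V.smul_mem _ hgV)
    · intro x hx
      have e1 : f.eval x = p'.eval x * q'.eval x := by rw [hfq', eval_mul]
      have e2 : g.eval x = p'.eval x * h'.eval x := by rw [hgh', eval_mul]
      rw [eval_add, eval_smul, smul_eq_mul, e1, e2]
      have h1 := hp'nonneg x hx
      have h2 := hmle x hx
      have h3 := hbracket x hx
      have h4 : |s * ε * h'.eval x| = ε * |h'.eval x| := by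
        rcases hs with rfl | rfl <;>
          simp [abs_mul, abs_of_pos hεpos]
      have h5 : 0 < q'.eval x + s * ε * h'.eval x := by
        have h6 : -(ε * |h'.eval x|) ≤ s * ε * h'.eval x := by
          rw [← h4]; exact neg_abs_le _
        linarith [abs_nonneg (h'.eval x)]
      calc (0:ℝ) ≤ p'.eval x * (q'.eval x + s * ε * h'.eval x) :=
            mul_nonneg h1 h5.le
        _ = p'.eval x * q'.eval x + s * ε * (p'.eval x * h'.eval x) := by ring
  have hmem1 := hmem 1 (Or.inl rfl)
  have hmem2 := hmem (-1) (Or.inr rfl)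
  rw [one_mul] at hmem1
  have hsum : (f + ε • g) + (f + (-1 * ε) • g) ∈
      {g : ℝ[X] | ∃ c : ℝ, 0 ≤ c ∧ g = c • f} := by
    refine ⟨2, by norm_num, ?_⟩
    module
  obtain ⟨hF1, -⟩ := hface.2.2.2 _ hmem1 _ hmem2 hsum
  obtain ⟨c, hc0, hc⟩ := hF1
  -- then g ∈ span {f}, contradiction
  apply hgspan
  rw [Submodule.mem_span_singleton]
  refine ⟨(c - 1) / ε, ?_⟩
  have hεg : ε • g = (c - 1) • f := by
    have h7 : ε • g = c • f - f := by
      rw [← hc]; abel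
    rw [h7, sub_smul, one_smul]
  calc ((c - 1) / ε) • f = (ε⁻¹ * (c - 1)) • f := by rw [div_eq_inv_mul]
    _ = ε⁻¹ • ((c - 1) • f) := by rw [smul_smul]
    _ = ε⁻¹ • (ε • g) := by rw [hεg]
    _ = g := by rw [smul_smul, inv_mul_cancel₀ hεpos.ne', one_smul]
end

section
/- Let I ⊆ ℝ be an unbounded non-degenerate closed interval, V ⊂ ℝ[t] finite-dimensional, P = {f ∈ V : f ≥ 0 on I}, and let f ∈ P span an extreme ray of P with d = deg(f). Setting V_d = {g ∈ V : deg(g) ≤ d}, the polynomial f has at least dim(V_d) − 1 roots in I counted with multiplicity. -/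
/-!
Write `f = p * q`, where `p` is the monic polynomial whose roots are the roots of `f` in `I`, so
that `q` has no zero on the closed set `I`. If `g ∈ V_d` is divisible by `p`, say `g = p * h`,
then `deg h ≤ deg q`; hence `|h| ≤ C |q|` on `I` (near infinity by comparing degrees, on the
compact rest because `q` does not vanish there), i.e. `|g| ≤ C f` on `I`. Then `f ± g / C` lie in
the cone, and since `f` spans an extreme ray, `g` is a multiple of `f`. So the kernel of
`g ↦ g %ₘ p` on `V_d`, whose image has dimension at most `deg p`, is at most one-dimensional.
-/

open Polynomial

open Filter Asymptotics Module

namespace Polynomial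

theorem exists_eq_prod_roots_filter_mul {R : Type*} [CommRing R] [IsDomain R] {f : R[X]}
    (hf : f ≠ 0) (s : Set R) [DecidablePred (· ∈ s)] :
    ∃ q : R[X], f = ((f.roots.filter (· ∈ s)).map fun a => X - C a).prod * q ∧
      ∀ x ∈ s, ¬q.IsRoot x := by
  obtain ⟨q, hfq⟩ := (Multiset.prod_dvd_prod_of_le
    (Multiset.map_le_map (f.roots.filter_le (· ∈ s)))).trans f.prod_multiset_X_sub_C_dvd
  refine ⟨q, hfq, fun x hx hqx => ?_⟩
  classical
  have hroots := congrArg (Multiset.count x) (congrArg roots hfq)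
  rw [roots_mul (hfq ▸ hf), roots_multiset_prod_X_sub_C, Multiset.count_add,
    Multiset.count_filter_of_pos hx] at hroots
  have : 0 < q.roots.count x :=
    Multiset.count_pos.2 ((mem_roots (right_ne_zero_of_mul (hfq ▸ hf))).2 hqx)
  omega

theorem finrank_le_natDegree_add_finrank {K : Type*} [Field K] {W U : Submodule K K[X]}
    [FiniteDimensional K W] [FiniteDimensional K U] {p : K[X]} (hp : p.Monic)
    (hdvd : ∀ g ∈ W, p ∣ g → g ∈ U) : finrank K W ≤ p.natDegree + finrank K U := by
  let Φ : W →ₗ[K] K[X] := (modByMonicHom p).comp W.subtype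
  have hrange : finrank K (LinearMap.range Φ) ≤ p.natDegree := by
    have := (degreeLTEquiv K p.natDegree).symm.finiteDimensional
    calc finrank K (LinearMap.range Φ) ≤ finrank K (degreeLT K p.natDegree) := by
          refine Submodule.finrank_mono ?_
          rintro _ ⟨g, rfl⟩
          rw [mem_degreeLT, ← degree_eq_natDegree hp.ne_zero]
          exact degree_modByMonic_lt _ hp
      _ = p.natDegree := by
          rw [(degreeLTEquiv K p.natDegree).finrank_eq, finrank_fin_fun]
  have hker : finrank K (LinearMap.ker Φ) ≤ finrank K U := by
    rw [← Submodule.finrank_map_subtype_eq]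
    refine Submodule.finrank_mono ?_
    rintro _ ⟨g, hg, rfl⟩
    exact hdvd g g.2 ((modByMonic_eq_zero_iff_dvd hp).1 hg)
  have := LinearMap.finrank_range_add_finrank_ker Φ
  omega

theorem isBigO_principal_of_degree_le {R : Type*} [NormedField R] [ProperSpace R] {I : Set R}
    (hI : IsClosed I) {h q : R[X]} (hq : ∀ x ∈ I, ¬q.IsRoot x) (hdeg : h.degree ≤ q.degree) :
    h.eval =O[𝓟 I] q.eval := by
  obtain ⟨c, hc⟩ := (isBigO_cobounded_of_degree_le hdeg).bound
  rw [Metric.cobounded_eq_cocompact] at hc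
  obtain ⟨K, hK, hKc⟩ := mem_cocompact.1 hc
  have hfar : h.eval =O[𝓟 Kᶜ] q.eval := isBigO_principal.2 ⟨c, fun x hx => hKc hx⟩
  have hnear : h.eval =O[𝓟 (K ∩ I)] q.eval :=
    (h.continuous.continuousOn.isBigO_principal (hK.inter_right hI) (c := (1 : R)) (by simp)).trans
      (q.continuous.continuousOn.isBigO_rev_principal (hK.inter_right hI)
        (fun x hx => hq x hx.2) (1 : R))
  refine (hnear.sup hfar).mono ?_
  rw [sup_principal, principal_mono]
  intro x hx
  by_cases hxK : x ∈ K
  exacts [Or.inl ⟨hxK, hx⟩, Or.inr hxK]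

end Polynomial

namespace IsFace

theorem mem_span_of_add_mem_of_sub_mem {C : Set ℝ[X]} {f g : ℝ[X]}
    (hface : IsFace C {g | ∃ c : ℝ, 0 ≤ c ∧ g = c • f}) (hadd : f + g ∈ C) (hsub : f - g ∈ C) :
    g ∈ ℝ ∙ f := by
  obtain ⟨⟨c, -, hc⟩, -⟩ := hface.2.2.2 _ hadd _ hsub ⟨2, zero_le_two, by rw [two_smul]; abel⟩
  exact Submodule.mem_span_singleton.2 ⟨c - 1, by rw [sub_smul, one_smul, ← hc]; abel⟩

theorem mem_span_of_isBigO {V : Submodule ℝ ℝ[X]} {I : Set ℝ} {f g : ℝ[X]}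
    (hface : IsFace {g | g ∈ V ∧ ∀ x ∈ I, 0 ≤ g.eval x} {g | ∃ c : ℝ, 0 ≤ c ∧ g = c • f})
    (hfV : f ∈ V) (hfI : ∀ x ∈ I, 0 ≤ f.eval x) (hgV : g ∈ V) (hg : g.eval =O[𝓟 I] f.eval) :
    g ∈ ℝ ∙ f := by
  obtain ⟨c, hc, hcg⟩ := hg.exists_pos
  have hbound : ∀ x ∈ I, |c⁻¹ * g.eval x| ≤ f.eval x := by
    intro x hx
    have := isBigOWith_principal.1 hcg x hx
    rw [Real.norm_eq_abs, Real.norm_of_nonneg (hfI x hx)] at this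
    rw [abs_mul, abs_inv, abs_of_pos hc, inv_mul_le_iff₀ hc]
    exact this
  have hmem : c⁻¹ • g ∈ ℝ ∙ f := by
    refine hface.mem_span_of_add_mem_of_sub_mem
      ⟨V.add_mem hfV (V.smul_mem _ hgV), fun x hx => ?_⟩
      ⟨V.sub_mem hfV (V.smul_mem _ hgV), fun x hx => ?_⟩ <;>
    simp only [eval_add, eval_sub, eval_smul, smul_eq_mul] <;>
    linarith [abs_le.1 (hbound x hx)]
  exact (Submodule.smul_mem_iff _ (inv_ne_zero hc.ne')).1 hmem

end IsFace

open Classical in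
theorem stmt_5 (V : Submodule ℝ (Polynomial ℝ)) [FiniteDimensional ℝ V]
    (I : Set ℝ)
    (hI : I = Set.univ ∨ (∃ a, I = Set.Ici a) ∨ ∃ a, I = Set.Iic a)
    (f : ℝ[X]) (hfV : f ∈ V) (hf0 : f ≠ 0) (hfP : ∀ x ∈ I, 0 ≤ f.eval x)
    (hface : IsFace {g : ℝ[X] | g ∈ V ∧ ∀ x ∈ I, 0 ≤ g.eval x}
      {g : ℝ[X] | ∃ c : ℝ, 0 ≤ c ∧ g = c • f}) :
    Module.finrank ℝ ↥(V ⊓ Polynomial.degreeLE ℝ f.degree) - 1 ≤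
      Multiset.card (f.roots.filter (· ∈ I)) := by
  have hIc : IsClosed I := by
    rcases hI with rfl | ⟨a, rfl⟩ | ⟨a, rfl⟩
    exacts [isClosed_univ, isClosed_Ici, isClosed_Iic]
  obtain ⟨q, hfq, hq⟩ := exists_eq_prod_roots_filter_mul hf0 I
  set p := ((f.roots.filter (· ∈ I)).map fun a => X - C a).prod
  have hp : p.Monic := monic_multiset_prod_of_monic _ _ fun a _ => monic_X_sub_C a
  have hdvd : ∀ g ∈ V ⊓ degreeLE ℝ f.degree, p ∣ g → g ∈ ℝ ∙ f := by
    rintro g hg ⟨h, rfl⟩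
    have hdeg : h.degree ≤ q.degree := by
      have hgdeg := mem_degreeLE.1 hg.2
      rw [hfq, degree_mul, degree_mul] at hgdeg
      exact (WithBot.add_le_add_iff_left (degree_ne_bot.2 hp.ne_zero)).1 hgdeg
    refine hface.mem_span_of_isBigO hfV hfP hg.1 ?_
    rw [hfq]
    simpa only [eval_mul] using (isBigO_refl p.eval _).mul (isBigO_principal_of_degree_le hIc hq hdeg)
  have := finrank_le_natDegree_add_finrank (W := V ⊓ degreeLE ℝ f.degree) hp hdvd
  rw [finrank_span_singleton hf0, natDegree_multiset_prod_X_sub_C_eq_card] at this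
  omega
end

section
/- Let p_0, …, p_n be a linear basis of a subspace V ⊂ ℝ[t], let ξ_1, …, ξ_r be pairwise distinct real numbers, and b_1, …, b_r ≥ 1 integers with b_1 + ⋯ + b_r = n. Then the (n+1)×(n+1) matrix A(t;ξ) whose first row is (p_0(t), …, p_n(t)) and whose remaining rows are the derivatives (p_0^{(j)}(ξ_i), …, p_n^{(j)}(ξ_i)) for i = 1,…,r and j = 0,…,b_i−1, has non-zero determinant if and only if the subspace {f ∈ V : ord_{ξ_i}(f) ≥ b_i for i = 1,…,r} has dimension one. -/
open Polynomial Module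

/-! Expanding `det A` along its first row gives `det A = ∑ c, (-1)^c Δ_c • p c`, where `Δ_c` are the
maximal minors of the `n × (n+1)` real matrix `B` of the functionals `f ↦ f⁽ʲ⁾(ξ i)` on the basis
`p`. Since the `p c` are linearly independent, `det A ≠ 0` iff some `Δ_c ≠ 0`, i.e. iff `ker B` is a
line. As `(X - ξ)^m ∣ f` iff `f⁽ʲ⁾(ξ) = 0` for all `j < m`, the coordinate map of the basis
identifies `ker B` with the subspace of `V` in question. -/

namespace Polynomial

theorem X_sub_C_pow_dvd_iff_eval_iterate_derivative_eq_zero {R : Type*} [CommRing R]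
    [NoZeroDivisors R] [CharZero R] {f : R[X]} {a : R} {m : ℕ} :
    (X - C a) ^ m ∣ f ↔ ∀ j < m, (derivative^[j] f).eval a = 0 := by
  rcases eq_or_ne f 0 with rfl | hf
  · simp
  cases m with
  | zero => simp
  | succ k =>
    rw [← le_rootMultiplicity_iff hf, Nat.succ_le_iff,
      lt_rootMultiplicity_iff_isRoot_iterate_derivative hf]
    simp only [Nat.lt_succ_iff, IsRoot.def]

end Polynomial

theorem Submodule.finrank_le_one_iff_exists_apply_eq_zero_imp_eq_zero {K ι : Type*} [Field K]
    [Fintype ι] [Nonempty ι] (W : Submodule K (ι → K)) :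
    finrank K W ≤ 1 ↔ ∃ c, ∀ x ∈ W, x c = 0 → x = 0 := by
  constructor
  · intro h
    obtain ⟨v, hv⟩ := finrank_le_one_iff.mp h
    by_cases hv0 : (v : ι → K) = 0
    · refine ⟨Classical.arbitrary ι, fun x hx _ => ?_⟩
      obtain ⟨a, ha⟩ := hv ⟨x, hx⟩
      simpa [hv0] using (congrArg Subtype.val ha).symm
    · obtain ⟨c, hc⟩ := Function.ne_iff.mp hv0
      refine ⟨c, fun x hx hxc => ?_⟩
      obtain ⟨a, ha⟩ := hv ⟨x, hx⟩
      have ha' : a • (v : ι → K) = x := congrArg Subtype.val ha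
      rw [← ha', Pi.smul_apply, smul_eq_mul, mul_eq_zero] at hxc
      rw [← ha', hxc.resolve_right hc, zero_smul]
  · rintro ⟨c, hc⟩
    have hinj : Function.Injective ((LinearMap.proj c : (ι → K) →ₗ[K] K) ∘ₗ W.subtype) := by
      rw [← LinearMap.ker_eq_bot, eq_bot_iff]
      rintro ⟨x, hx⟩ hxc
      simpa using hc x hx hxc
    simpa using LinearMap.finrank_le_finrank_of_injective hinj

namespace Matrix

variable {n : ℕ}

section CommRing

variable {R : Type*} [CommRing R]

theorem mulVec_insertNth_zero {m : Type*} (M : Matrix m (Fin (n + 1)) R) (c : Fin (n + 1))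
    (z : Fin n → R) :
    M *ᵥ c.insertNth 0 z = M.submatrix id c.succAbove *ᵥ z := by
  ext k
  simp [mulVec, dotProduct, Fin.sum_univ_succAbove _ c]

theorem det_submatrix_succAbove_ne_zero_iff [IsDomain R] (M : Matrix (Fin n) (Fin (n + 1)) R)
    (c : Fin (n + 1)) :
    (M.submatrix id c.succAbove).det ≠ 0 ↔ ∀ x, M *ᵥ x = 0 → x c = 0 → x = 0 := by
  rw [Ne, ← exists_mulVec_eq_zero_iff]
  simp only [not_exists, not_and, imp_not_comm, not_not]
  constructor
  · intro h x hx hxc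
    have hx' : x = c.insertNth 0 (c.removeNth x) := Fin.eq_insertNth_iff.mpr ⟨hxc, rfl⟩
    rw [hx', mulVec_insertNth_zero] at hx
    rw [hx', h _ hx]
    exact Fin.insertNth_eq_iff.mpr ⟨rfl, rfl⟩
  · intro h z hz
    rw [← mulVec_insertNth_zero] at hz
    exact (Fin.insertNth_eq_iff.mp (h _ hz (Fin.insertNth_apply_same _ _ _))).2

variable {S : Type*} [CommRing S] [Algebra R S]

theorem det_eq_sum_smul_of_succ_rows_eq_algebraMap (A : Matrix (Fin (n + 1)) (Fin (n + 1)) S)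
    (B : Matrix (Fin n) (Fin (n + 1)) R) (hB : ∀ k c, A k.succ c = algebraMap R S (B k c)) :
    A.det = ∑ c : Fin (n + 1), ((-1) ^ (c : ℕ) * (B.submatrix id c.succAbove).det) • A 0 c := by
  rw [det_succ_row_zero]
  refine Finset.sum_congr rfl fun c _ => ?_
  have hminor : A.submatrix Fin.succ c.succAbove =
      (algebraMap R S).mapMatrix (B.submatrix id c.succAbove) := by
    ext k j
    simp [hB]
  rw [hminor, ← RingHom.map_det, Algebra.smul_def]
  simp only [map_mul, map_pow, map_neg, map_one]
  ring

theorem det_ne_zero_iff_exists_det_submatrix_ne_zero (A : Matrix (Fin (n + 1)) (Fin (n + 1)) S)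
    (B : Matrix (Fin n) (Fin (n + 1)) R) (hB : ∀ k c, A k.succ c = algebraMap R S (B k c))
    (hA0 : LinearIndependent R (A 0)) :
    A.det ≠ 0 ↔ ∃ c : Fin (n + 1), (B.submatrix id c.succAbove).det ≠ 0 := by
  rw [det_eq_sum_smul_of_succ_rows_eq_algebraMap A B hB]
  constructor
  · intro h
    by_contra! hc
    simp [hc] at h
  · rintro ⟨c, hc⟩ h
    have := Fintype.linearIndependent_iff.mp hA0 _ h c
    exact hc (((isUnit_neg_one (α := R)).pow _).mul_right_eq_zero.mp this)

end CommRing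

section Field

variable {K : Type*} [Field K]

theorem one_le_finrank_ker_mulVecLin (M : Matrix (Fin n) (Fin (n + 1)) K) :
    1 ≤ finrank K (LinearMap.ker M.mulVecLin) := by
  have := LinearMap.finrank_range_add_finrank_ker M.mulVecLin
  have := M.rank_le_card_height
  simp only [finrank_fin_fun, Fintype.card_fin, Matrix.rank] at *
  omega

theorem finrank_ker_mulVecLin_eq_one_iff (M : Matrix (Fin n) (Fin (n + 1)) K) :
    finrank K (LinearMap.ker M.mulVecLin) = 1 ↔
      ∃ c : Fin (n + 1), (M.submatrix id c.succAbove).det ≠ 0 := by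
  simp only [det_submatrix_succAbove_ne_zero_iff, ← mulVecLin_apply, ← LinearMap.mem_ker]
  rw [← Submodule.finrank_le_one_iff_exists_apply_eq_zero_imp_eq_zero]
  have := M.one_le_finrank_ker_mulVecLin
  omega

end Field

end Matrix

theorem finrank_span_inf_iInf_ker_eq_finrank_ker_mulVecLin {K M ι κ : Type*} [Field K]
    [AddCommGroup M] [Module K M] [Fintype ι] {p : ι → M} (hp : LinearIndependent K p)
    (ℓ : κ → M →ₗ[K] K) :
    finrank K ↥(Submodule.span K (Set.range p) ⊓ ⨅ k, LinearMap.ker (ℓ k)) =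
      finrank K (LinearMap.ker (Matrix.of fun k c => ℓ k (p c)).mulVecLin) := by
  set L := Fintype.linearCombination K p
  have hker : LinearMap.ker (Matrix.of fun k c => ℓ k (p c)).mulVecLin =
      (⨅ k, LinearMap.ker (ℓ k)).comap L := by
    ext x
    simp [L, Fintype.linearCombination_apply, funext_iff, Matrix.mulVec, dotProduct, mul_comm]
  rw [hker, ← Fintype.range_linearCombination, ← Submodule.map_comap_eq]
  exact (Submodule.equivMapOfInjective L hp.fintypeLinearCombination_injective _).finrank_eq.symm

def finSigmaRangeEquiv (b : ℕ → ℕ) (r : ℕ) :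
    (Σ i : Fin r, Fin (b i)) ≃ Fin (∑ i ∈ Finset.range r, b i) :=
  finSigmaFinEquiv.trans (finCongr (Fin.sum_univ_eq_sum_range b r))

theorem finSigmaRangeEquiv_apply_val (b : ℕ → ℕ) (r : ℕ) (s : Σ i : Fin r, Fin (b i)) :
    (finSigmaRangeEquiv b r s : ℕ) = ∑ i ∈ Finset.range s.1, b i + s.2 := by
  simp [finSigmaRangeEquiv, finSigmaFinEquiv_apply, Fin.sum_univ_eq_sum_range b]

theorem stmt_6_general (n r : ℕ) (p : Fin (n + 1) → ℝ[X])
    (hli : LinearIndependent ℝ p)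
    (ξ : ℕ → ℝ)
    (b : ℕ → ℕ)
    (hsum : ∑ i ∈ Finset.range r, b i = n)
    (A : Matrix (Fin (n + 1)) (Fin (n + 1)) ℝ[X])
    (hA0 : ∀ c, A 0 c = p c)
    (hA : ∀ i < r, ∀ j < b i,
      ∀ (hrow : 1 + (∑ i' ∈ Finset.range i, b i') + j < n + 1) (c : Fin (n + 1)),
        A ⟨1 + (∑ i' ∈ Finset.range i, b i') + j, hrow⟩ c =
          C (Polynomial.eval (ξ i) (Polynomial.derivative^[j] (p c)))) :
    A.det ≠ 0 ↔
      Module.finrank ℝ (Submodule.span ℝ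
        {f : ℝ[X] | f ∈ Submodule.span ℝ (Set.range p) ∧
          ∀ i < r, (X - C (ξ i)) ^ b i ∣ f}) = 1 := by
  let e := (finSigmaRangeEquiv b r).trans (finCongr hsum)
  let ℓ : (Σ i : Fin r, Fin (b i)) → ℝ[X] →ₗ[ℝ] ℝ := fun s =>
    leval (ξ s.1) ∘ₗ (derivative : ℝ[X] →ₗ[ℝ] ℝ[X]) ^ (s.2 : ℕ)
  have hℓ : ∀ s f, ℓ s f = (derivative^[s.2] f).eval (ξ s.1) := fun s f => by
    simp [ℓ, Module.End.pow_apply]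
  have hrows : ∀ k c, A k.succ c = algebraMap ℝ ℝ[X] (ℓ (e.symm k) (p c)) := by
    intro k c
    obtain ⟨s, rfl⟩ := e.surjective k
    have hval : ((e s).succ : ℕ) = 1 + ∑ i ∈ Finset.range s.1, b i + s.2 := by
      simp only [e, Equiv.trans_apply, finCongr_apply, Fin.val_succ, Fin.val_cast,
        finSigmaRangeEquiv_apply_val]
      omega
    rw [e.symm_apply_apply, hℓ, algebraMap_eq,
      ← hA s.1 s.1.isLt s.2 s.2.isLt (hval ▸ (e s).succ.isLt) c]
    exact congrArg (A · c) (Fin.ext hval)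
  have hset : {f : ℝ[X] | f ∈ Submodule.span ℝ (Set.range p) ∧
      ∀ i < r, (X - C (ξ i)) ^ b i ∣ f} =
      ↑(Submodule.span ℝ (Set.range p) ⊓ ⨅ k, LinearMap.ker (ℓ (e.symm k))) := by
    rw [e.symm.iInf_comp (g := fun s => LinearMap.ker (ℓ s))]
    ext f
    simp [X_sub_C_pow_dvd_iff_eval_iterate_derivative_eq_zero, hℓ, Sigma.forall, Fin.forall_iff]
  rw [Matrix.det_ne_zero_iff_exists_det_submatrix_ne_zero A
      (Matrix.of fun k c => ℓ (e.symm k) (p c)) hrows ((funext hA0).symm ▸ hli),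
    hset, Submodule.span_eq, finrank_span_inf_iInf_ker_eq_finrank_ker_mulVecLin hli,
    Matrix.finrank_ker_mulVecLin_eq_one_iff]

theorem stmt_6 (n r : ℕ) (p : Fin (n + 1) → ℝ[X])
    (hli : LinearIndependent ℝ p)
    (ξ : ℕ → ℝ) (hξ : ∀ i < r, ∀ j < r, ξ i = ξ j → i = j)
    (b : ℕ → ℕ) (hb : ∀ i < r, 1 ≤ b i)
    (hsum : ∑ i ∈ Finset.range r, b i = n)
    (A : Matrix (Fin (n + 1)) (Fin (n + 1)) ℝ[X])
    (hA0 : ∀ c, A 0 c = p c)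
    (hA : ∀ i < r, ∀ j < b i,
      ∀ (hrow : 1 + (∑ i' ∈ Finset.range i, b i') + j < n + 1) (c : Fin (n + 1)),
        A ⟨1 + (∑ i' ∈ Finset.range i, b i') + j, hrow⟩ c =
          C (Polynomial.eval (ξ i) (Polynomial.derivative^[j] (p c)))) :
    A.det ≠ 0 ↔
      Module.finrank ℝ (Submodule.span ℝ
        {f : ℝ[X] | f ∈ Submodule.span ℝ (Set.range p) ∧
          ∀ i < r, (X - C (ξ i)) ^ b i ∣ f}) = 1 :=
  stmt_6_general n r p hli ξ b hsum A hA0 hA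
end

section
/- Every non-zero polynomial in the linear span of monomials t^{m_0}, …, t^{m_n} (with m_0 > ⋯ > m_n ≥ 0) has at most n strictly positive real roots, counted with multiplicity. -/
open Polynomial Finset

/-
Descartes' rule of signs bounds the positive roots by the number of sign changes in the
coefficient sequence, and a polynomial with at most `n + 1` nonzero coefficients has at most
`n` sign changes. A polynomial in the span of `X ^ m₀, …, X ^ mₙ` has its support among the `mᵢ`.
-/

namespace Polynomial

variable {R : Type*} [Semiring R]

theorem signVariations_le_card_support_sub_one [LinearOrder R] (P : R[X]) :
    signVariations P ≤ #P.support - 1 := by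
  induction hP : #P.support generalizing P with
  | zero => simp [card_support_eq_zero.mp hP]
  | succ k ih =>
    rcases k with _ | k
    · obtain ⟨d, c, -, rfl⟩ := card_support_eq_one.mp hP
      simp [C_mul_X_pow_eq_monomial]
    · calc signVariations P ≤ signVariations P.eraseLead + 1 := signVariations_le_eraseLead_succ P
        _ ≤ k + 1 := by grw [ih P.eraseLead (card_support_eraseLead' hP)]; omega

theorem support_subset_image_of_mem_span_X_pow {ι : Type*} [Fintype ι] (m : ι → ℕ) {f : R[X]}
    (hf : f ∈ Submodule.span R (Set.range fun i => (X : R[X]) ^ m i)) :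
    f.support ⊆ univ.image m := by
  induction hf using Submodule.span_induction with
  | mem p hp =>
    obtain ⟨i, rfl⟩ := hp
    simp only [X_pow_eq_monomial]
    exact (support_monomial_subset _ _).trans
      (singleton_subset_iff.mpr (mem_image_of_mem m (mem_univ i)))
  | zero => simp
  | add p q _ _ hp hq => exact support_add.trans (union_subset hp hq)
  | smul c p _ hp => exact (support_smul c p).trans hp

end Polynomial

theorem stmt_10_general (n : ℕ) (m : Fin (n + 1) → ℕ) (f : ℝ[X])
    (hf : f ∈ Submodule.span ℝ (Set.range fun i => (X : ℝ[X]) ^ m i)) :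
    Multiset.card (f.roots.filter (fun x => 0 < x)) ≤ n := by
  have hsupport : #f.support ≤ n + 1 :=
    (card_le_card (support_subset_image_of_mem_span_X_pow m hf)).trans
      (card_image_le.trans_eq (card_fin _))
  calc Multiset.card (f.roots.filter (fun x => 0 < x))
      = f.roots.countP (0 < ·) := (Multiset.countP_eq_card_filter _ _).symm
    _ ≤ signVariations f := roots_countP_pos_le_signVariations f
    _ ≤ #f.support - 1 := signVariations_le_card_support_sub_one f
    _ ≤ n := by omega

/-- Every non-zero polynomial in the span of `t^{m_0}, …, t^{m_n}` (with
`m_0 > ⋯ > m_n ≥ 0`) has at most `n` strictly positive roots, counted with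
multiplicity. -/
theorem stmt_10 (n : ℕ) (m : Fin (n + 1) → ℕ) (hm : StrictAnti m) (f : ℝ[X])
    (hf : f ∈ Submodule.span ℝ (Set.range fun i => (X : ℝ[X]) ^ m i))
    (hf0 : f ≠ 0) :
    Multiset.card (f.roots.filter (fun x => 0 < x)) ≤ n :=
  stmt_10_general n m f hf
end

section
/- Let m_0 > ⋯ > m_n ≥ 0 be integers, V = span(t^{m_0}, …, t^{m_n}), I = [0,1] or I = ℝ₊, and P = {f ∈ V : f ≥ 0 on I}. If f spans an extreme ray of P, f(0) > 0, and deg(f) = m_0, then f has exactly n strictly positive roots counted with multiplicity, and all of them lie in I. -/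
/-!
An element of `V` has at most `n + 1` nonzero coefficients, so by Descartes' rule of signs `f` has
at most `n` positive roots. Conversely, let `q` be the product of the linear factors of `f` at its
roots in `I`. If `f` had fewer than `n` roots in `I`, a dimension count would give a nonzero
`g ∈ V` divisible by `q` whose coefficient at `t^{m_0}` vanishes. Writing `f = q f₁` and
`g = q g₁`, the quotient `g₁ / f₁` is bounded on `I` (`f₁` has no zeros there and
`deg g₁ ≤ deg f₁`), so `f ± ε g ≥ 0` on `I` for small `ε > 0`. As `ℝ₊ f` is a face, `f + ε g`
is a multiple of `f`, and comparing coefficients at `t^{m_0}` forces `g = 0`. Hence the positive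
roots of `f` are exactly its roots in `I`, and there are `n` of them.
-/

open Polynomial

namespace Polynomial

theorem length_filter_sign_coeffList_le {R : Type*} [Semiring R] [LinearOrder R] (P : R[X]) :
    ((P.coeffList.map SignType.sign).filter (· ≠ 0)).length ≤ P.support.card := by
  simp only [coeffList, List.map_map, List.filter_map, List.length_map, List.filter_reverse,
    List.length_reverse]
  rw [← List.toFinset_card_of_nodup (List.nodup_range.filter _)]
  refine Finset.card_le_card fun i hi => ?_
  simp only [List.mem_toFinset, List.mem_filter] at hi
  simpa using hi.2

theorem signVariations_lt_card_support {R : Type*} [Semiring R] [LinearOrder R] {P : R[X]}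
    (hP : P ≠ 0) : P.signVariations < P.support.card := by
  have hlen := (List.destutter_sublist (R := (· ≠ ·)) _).length_le.trans
    P.length_filter_sign_coeffList_le
  have hpos := Finset.card_pos.2 (nonempty_support_iff.2 hP)
  unfold signVariations
  omega

theorem card_roots_filter_pos_lt_card_support {R : Type*} [CommRing R] [LinearOrder R]
    [IsStrictOrderedRing R] {P : R[X]} (hP : P ≠ 0) :
    Multiset.card (P.roots.filter (0 < ·)) < P.support.card := by
  rw [← Multiset.countP_eq_card_filter]
  exact P.roots_countP_pos_le_signVariations.trans_lt (signVariations_lt_card_support hP)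

theorem exists_eq_prod_X_sub_C_roots_filter_mul {R : Type*} [CommRing R] [IsDomain R]
    {p : R[X]} (hp : p ≠ 0) (s : Set R) [DecidablePred (· ∈ s)] :
    ∃ p₁ : R[X], p = ((p.roots.filter (· ∈ s)).map fun a => X - C a).prod * p₁ ∧
      ∀ x ∈ s, p₁.eval x ≠ 0 := by
  classical
  obtain ⟨p₁, hp₁⟩ := (Multiset.prod_dvd_prod_of_le
    (Multiset.map_le_map (Multiset.filter_le (· ∈ s) p.roots))).trans
    (prod_multiset_X_sub_C_dvd p)
  refine ⟨p₁, hp₁, fun x hx hx₁ => ?_⟩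
  have hcount := congrArg (Multiset.count x) (congrArg roots hp₁)
  rw [roots_mul (hp₁ ▸ hp), roots_multiset_prod_X_sub_C, Multiset.count_add,
    Multiset.count_filter_of_pos hx, left_eq_add, count_roots] at hcount
  exact (rootMultiplicity_pos (right_ne_zero_of_mul (hp₁ ▸ hp))).2 hx₁ |>.ne' hcount

theorem exists_abs_eval_le_mul_abs_eval {s : Set ℝ} (hs : IsClosed s) {p q : ℝ[X]}
    (hq : ∀ x ∈ s, q.eval x ≠ 0) (hdeg : p.degree ≤ q.degree) :
    ∃ M, 0 < M ∧ ∀ x ∈ s, |p.eval x| ≤ M * |q.eval x| := by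
  obtain ⟨c, hc⟩ := (isBigO_cobounded_of_degree_le hdeg).bound
  rw [Metric.cobounded_eq_cocompact, Filter.eventually_iff, Filter.mem_cocompact] at hc
  obtain ⟨K, hK, hKc⟩ := hc
  have hratio : ContinuousOn (fun x => p.eval x / q.eval x) (s ∩ K) :=
    p.continuous.continuousOn.div q.continuous.continuousOn fun x hx => hq x hx.1
  obtain ⟨C, hC⟩ := (hK.inter_left hs).exists_bound_of_continuousOn hratio
  refine ⟨max (max c C) 1, by positivity, fun x hx => ?_⟩
  by_cases hxK : x ∈ K
  · have hxC := hC x ⟨hx, hxK⟩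
    rw [norm_div, Real.norm_eq_abs, Real.norm_eq_abs, div_le_iff₀ (abs_pos.2 (hq x hx))] at hxC
    exact hxC.trans (by gcongr; exact (le_max_right _ _).trans (le_max_left _ _))
  · have hxc : |p.eval x| ≤ c * |q.eval x| := hKc hxK
    exact hxc.trans (by gcongr; exact (le_max_left _ _).trans (le_max_left _ _))

section MonomialSpan

variable {R ι : Type*} [Semiring R]

theorem support_subset_of_mem_span_X_pow [Nontrivial R] [Fintype ι] (m : ι → ℕ) {g : R[X]}
    (hg : g ∈ Submodule.span R (Set.range fun i => (X : R[X]) ^ m i)) :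
    g.support ⊆ Finset.univ.image m := by
  induction hg using Submodule.span_induction with
  | mem x hx =>
    obtain ⟨i, rfl⟩ := hx
    simp [support_X_pow]
  | zero => simp
  | add x y _ _ hx hy => exact support_add.trans (Finset.union_subset hx hy)
  | smul c x _ hx => exact (support_smul c x).trans hx

theorem card_support_le_of_mem_span_X_pow [Nontrivial R] [Fintype ι] (m : ι → ℕ) {g : R[X]}
    (hg : g ∈ Submodule.span R (Set.range fun i => (X : R[X]) ^ m i)) :
    g.support.card ≤ Fintype.card ι :=
  (Finset.card_le_card (support_subset_of_mem_span_X_pow m hg)).trans Finset.card_image_le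

theorem natDegree_le_of_mem_span_X_pow {m : ι → ℕ} {d : ℕ} (hd : ∀ i, m i ≤ d) {g : R[X]}
    (hg : g ∈ Submodule.span R (Set.range fun i => (X : R[X]) ^ m i)) : g.natDegree ≤ d := by
  suffices Submodule.span R (Set.range fun i => (X : R[X]) ^ m i) ≤ degreeLE R d from
    natDegree_le_iff_degree_le.2 (mem_degreeLE.1 (this hg))
  rw [Submodule.span_le]
  rintro _ ⟨i, rfl⟩
  exact mem_degreeLE.2 ((degree_X_pow_le _).trans (by exact_mod_cast hd i))

theorem linearIndependent_X_pow {m : ι → ℕ} (hm : Function.Injective m) :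
    LinearIndependent R (fun i => (X : R[X]) ^ m i) := by
  simpa [Function.comp_def, monomial_one_right_eq_X_pow] using
    (basisMonomials R).linearIndependent.comp m hm

theorem finrank_span_X_pow [Nontrivial R] [StrongRankCondition R] [Fintype ι] {m : ι → ℕ}
    (hm : Function.Injective m) :
    Module.finrank R (Submodule.span R (Set.range fun i => (X : R[X]) ^ m i)) = Fintype.card ι :=
  finrank_span_eq_card (linearIndependent_X_pow hm)

end MonomialSpan

/-- The conditions `q ∣ g` and `g.coeff k = 0` are `q.natDegree + 1` linear equations on `g`. -/
theorem exists_ne_zero_dvd_coeff_eq_zero {K : Type*} [Field K] (W : Submodule K K[X])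
    [FiniteDimensional K W] {q : K[X]} (hq : q.Monic) (k : ℕ)
    (hW : q.natDegree + 1 < Module.finrank K W) :
    ∃ g ∈ W, g ≠ 0 ∧ q ∣ g ∧ g.coeff k = 0 := by
  have hmod : ∀ p, modByMonicHom q p ∈ degreeLT K q.natDegree := fun p => by
    rw [mem_degreeLT, ← degree_eq_natDegree hq.ne_zero]
    exact degree_modByMonic_lt p hq
  let L : W →ₗ[K] degreeLT K q.natDegree × K :=
    ((LinearMap.codRestrict _ (modByMonicHom q) hmod).comp W.subtype).prod
      ((lcoeff K k).comp W.subtype)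
  have : FiniteDimensional K (degreeLT K q.natDegree) :=
    Module.Finite.equiv (degreeLTEquiv K q.natDegree).symm
  have hL : Module.finrank K (degreeLT K q.natDegree × K) < Module.finrank K W := by
    rwa [Module.finrank_prod, (degreeLTEquiv K _).finrank_eq, Module.finrank_fin_fun,
      Module.finrank_self]
  obtain ⟨⟨g, hgW⟩, hgL, hg0⟩ := Submodule.exists_mem_ne_zero_of_ne_bot
    (LinearMap.ker_ne_bot_of_finrank_lt (f := L) hL)
  simp only [LinearMap.mem_ker, Prod.ext_iff] at hgL
  refine ⟨g, hgW, fun h => hg0 (by simp [h]), ?_, hgL.2⟩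
  exact (modByMonic_eq_zero_iff_dvd hq).1 (congrArg Subtype.val hgL.1)

end Polynomial

theorem IsFace.generator_mem {C : Set ℝ[X]} {f : ℝ[X]}
    (hF : IsFace C {p | ∃ c : ℝ, 0 ≤ c ∧ p = c • f}) : f ∈ C :=
  hF.1 ⟨1, zero_le_one, (one_smul ℝ f).symm⟩

theorem IsFace.add_mem {C F : Set ℝ[X]} (hF : IsFace C F) {x y : ℝ[X]} (hx : x ∈ F)
    (hadd : x + y ∈ C) (hsub : x - y ∈ C) : x + y ∈ F :=
  (hF.2.2.2 _ hadd _ hsub (by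
    rw [add_add_sub_cancel, ← two_smul ℝ x]
    exact hF.2.1 2 zero_le_two x hx)).1

/-- `f ± M⁻¹ • g` lie in the cone and add up to `2 • f`, so `f + M⁻¹ • g` lies on the ray. -/
theorem IsFace.eq_zero_of_abs_eval_le {V : Submodule ℝ ℝ[X]} {I : Set ℝ} {f g : ℝ[X]}
    (hface : IsFace {p | p ∈ V ∧ ∀ x ∈ I, 0 ≤ p.eval x} {p | ∃ c : ℝ, 0 ≤ c ∧ p = c • f})
    (hgV : g ∈ V) {M : ℝ} (hM : 0 < M)
    (hgf : ∀ x ∈ I, |g.eval x| ≤ M * f.eval x)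
    {k : ℕ} (hfk : f.coeff k ≠ 0) (hgk : g.coeff k = 0) : g = 0 := by
  have hfV := hface.generator_mem.1
  have hdom : ∀ x ∈ I, |(M⁻¹ • g).eval x| ≤ f.eval x := fun x hx => by
    rw [eval_smul, smul_eq_mul, abs_mul, abs_of_pos (inv_pos.2 hM), inv_mul_le_iff₀ hM]
    exact hgf x hx
  have hadd : f + M⁻¹ • g ∈ {p | p ∈ V ∧ ∀ x ∈ I, 0 ≤ p.eval x} :=
    ⟨V.add_mem hfV (V.smul_mem _ hgV), fun x hx => by
      rw [eval_add]; linarith [neg_abs_le ((M⁻¹ • g).eval x), hdom x hx]⟩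
  have hsub : f - M⁻¹ • g ∈ {p | p ∈ V ∧ ∀ x ∈ I, 0 ≤ p.eval x} :=
    ⟨V.sub_mem hfV (V.smul_mem _ hgV), fun x hx => by
      rw [eval_sub]; linarith [le_abs_self ((M⁻¹ • g).eval x), hdom x hx]⟩
  obtain ⟨c, -, hc⟩ := hface.add_mem ⟨1, zero_le_one, (one_smul ℝ f).symm⟩ hadd hsub
  have hc1 : c = 1 := by
    have hck := congrArg (coeff · k) hc
    simp only [coeff_add, coeff_smul, hgk, smul_eq_mul, mul_zero, add_zero] at hck
    exact (mul_eq_right₀ hfk).1 hck.symm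
  rw [hc1, one_smul, add_eq_left, smul_eq_zero] at hc
  exact hc.resolve_left (inv_ne_zero hM.ne')

theorem le_card_roots_filter_of_isFace {n : ℕ} {m : Fin (n + 1) → ℕ} (hm : StrictAnti m)
    {I : Set ℝ} (hI : IsClosed I) {f : ℝ[X]} (hf0 : f ≠ 0)
    (hface : IsFace
      {g : ℝ[X] | g ∈ Submodule.span ℝ (Set.range fun i => (X : ℝ[X]) ^ m i) ∧
        ∀ x ∈ I, 0 ≤ g.eval x}
      {g : ℝ[X] | ∃ c : ℝ, 0 ≤ c ∧ g = c • f})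
    (hdeg : f.natDegree = m 0) [DecidablePred (· ∈ I)] :
    n ≤ Multiset.card (f.roots.filter (· ∈ I)) := by
  by_contra! hlt
  obtain ⟨f₁, hf, hf₁⟩ := exists_eq_prod_X_sub_C_roots_filter_mul hf0 I
  set q := ((f.roots.filter (· ∈ I)).map fun a => X - C a).prod
  have hq : q.Monic := monic_multiset_prod_of_monic _ _ fun a _ => monic_X_sub_C a
  have : FiniteDimensional ℝ (Submodule.span ℝ (Set.range fun i => (X : ℝ[X]) ^ m i)) :=
    FiniteDimensional.span_of_finite ℝ (Set.finite_range _)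
  obtain ⟨g, hgV, hg0, ⟨g₁, rfl⟩, hgk⟩ := exists_ne_zero_dvd_coeff_eq_zero _ hq (m 0) (by
    rw [finrank_span_X_pow hm.injective, natDegree_multiset_prod_X_sub_C_eq_card,
      Fintype.card_fin]
    omega)
  have hf₁0 : f₁ ≠ 0 := right_ne_zero_of_mul (hf ▸ hf0)
  have hg₁0 : g₁ ≠ 0 := right_ne_zero_of_mul hg0
  have hdeg₁ : g₁.degree ≤ f₁.degree := by
    have hgdeg := natDegree_le_of_mem_span_X_pow (fun i => hm.antitone (Fin.zero_le i)) hgV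
    rw [natDegree_mul hq.ne_zero hg₁0] at hgdeg
    rw [hf, natDegree_mul hq.ne_zero hf₁0] at hdeg
    rw [degree_eq_natDegree hg₁0, degree_eq_natDegree hf₁0]
    exact_mod_cast (by omega : g₁.natDegree ≤ f₁.natDegree)
  obtain ⟨M, hM, hbound⟩ := exists_abs_eval_le_mul_abs_eval hI hf₁ hdeg₁
  refine hg0 (hface.eq_zero_of_abs_eval_le hgV hM (fun x hx => ?_)
    (hdeg ▸ leadingCoeff_ne_zero.2 hf0) hgk)
  rw [← abs_of_nonneg (hface.generator_mem.2 x hx), hf, eval_mul, eval_mul, abs_mul, abs_mul,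
    mul_left_comm]
  exact mul_le_mul_of_nonneg_left (hbound x hx) (abs_nonneg _)

theorem stmt_11_general (n : ℕ) (m : Fin (n + 1) → ℕ) (hm : StrictAnti m)
    (I : Set ℝ) (hI : I = Set.Icc 0 1 ∨ I = Set.Ici 0) (f : ℝ[X])
    (hface : IsFace
      {g : ℝ[X] | g ∈ Submodule.span ℝ (Set.range fun i => (X : ℝ[X]) ^ m i) ∧
        ∀ x ∈ I, 0 ≤ g.eval x}
      {g : ℝ[X] | ∃ c : ℝ, 0 ≤ c ∧ g = c • f})
    (hf00 : 0 < f.eval 0) (hdeg : f.natDegree = m 0) :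
    Multiset.card (f.roots.filter (fun x => 0 < x)) = n ∧
      ∀ x : ℝ, 0 < x → f.eval x = 0 → x ∈ I := by
  classical
  have hf0 : f ≠ 0 := by rintro rfl; simp at hf00
  obtain ⟨hIclosed, hInonneg⟩ : IsClosed I ∧ ∀ x ∈ I, 0 ≤ x := by
    rcases hI with rfl | rfl
    exacts [⟨isClosed_Icc, fun x hx => hx.1⟩, ⟨isClosed_Ici, fun x hx => hx⟩]
  have hIpos : f.roots.filter (· ∈ I) ≤ f.roots.filter (0 < ·) :=
    Multiset.le_filter.2 ⟨Multiset.filter_le _ _, fun x hx => by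
      obtain ⟨hxf, hxI⟩ := Multiset.mem_filter.1 hx
      refine (hInonneg x hxI).lt_of_ne ?_
      rintro rfl
      exact hf00.ne' ((mem_roots hf0).1 hxf)⟩
  have hposn : Multiset.card (f.roots.filter (0 < ·)) ≤ n := by
    have := (card_roots_filter_pos_lt_card_support hf0).trans_le
      (card_support_le_of_mem_span_X_pow m hface.generator_mem.1)
    rw [Fintype.card_fin] at this
    omega
  have hnI := le_card_roots_filter_of_isFace hm hIclosed hf0 hface hdeg
  have heq := Multiset.eq_of_le_of_card_le hIpos (hposn.trans hnI)
  refine ⟨le_antisymm hposn (heq ▸ hnI), fun x hx hfx => ?_⟩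
  have hxpos : x ∈ f.roots.filter (0 < ·) :=
    Multiset.mem_filter.2 ⟨(mem_roots hf0).2 hfx, hx⟩
  exact (Multiset.mem_filter.1 (heq ▸ hxpos)).2

theorem stmt_11 (n : ℕ) (m : Fin (n + 1) → ℕ) (hm : StrictAnti m)
    (I : Set ℝ) (hI : I = Set.Icc 0 1 ∨ I = Set.Ici 0) (f : ℝ[X])
    (hfV : f ∈ Submodule.span ℝ (Set.range fun i => (X : ℝ[X]) ^ m i))
    (hf0 : f ≠ 0)
    (hface : IsFace
      {g : ℝ[X] | g ∈ Submodule.span ℝ (Set.range fun i => (X : ℝ[X]) ^ m i) ∧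
        ∀ x ∈ I, 0 ≤ g.eval x}
      {g : ℝ[X] | ∃ c : ℝ, 0 ≤ c ∧ g = c • f})
    (hf00 : 0 < f.eval 0) (hdeg : f.natDegree = m 0) :
    Multiset.card (f.roots.filter (fun x => 0 < x)) = n ∧
      ∀ x : ℝ, 0 < x → f.eval x = 0 → x ∈ I :=
  stmt_11_general n m hm I hI f hface hf00 hdeg
end

section
/- For d = 2k, the set of univariate real polynomials of degree at most 2k that are non-negative on ℝ₊ equals Σ_{2k} + t·Σ_{2k−2}, where Σ_{2m} denotes sums of squares of degree at most 2m. -/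
/-!
If `f ≥ 0` on `ℝ₊`, then `f(t²)` is non-negative on all of `ℝ`, hence a sum of squares `∑ gⱼ²`:
subtracting the global minimum `f(a)` leaves a polynomial with a double root at `a`, and one
inducts on the degree. Splitting each `gⱼ(t) = Eⱼ(t²) + t Oⱼ(t²)` into even and odd parts,
the even part of `∑ gⱼ²` is `∑ Eⱼ(t²)² + t² ∑ Oⱼ(t²)²`, i.e. `f = ∑ Eⱼ² + t ∑ Oⱼ²`.
-/

open Polynomial

/-- `σ` is a sum of squares of polynomials of degree at most `k`. -/
def IsSOS (k : ℕ) (σ : Polynomial ℝ) : Prop :=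
  ∃ (l : ℕ) (g : Fin l → Polynomial ℝ), (∀ j, (g j).natDegree ≤ k) ∧ σ = ∑ j, g j ^ 2

namespace IsSOS

variable {k : ℕ} {σ τ : ℝ[X]}

theorem eval_nonneg (h : IsSOS k σ) (x : ℝ) : 0 ≤ σ.eval x := by
  obtain ⟨l, g, -, rfl⟩ := h
  simp only [eval_finsetSum, eval_pow]
  exact Finset.sum_nonneg fun j _ => sq_nonneg _

theorem natDegree_le (h : IsSOS k σ) : σ.natDegree ≤ 2 * k := by
  obtain ⟨l, g, hg, rfl⟩ := h
  refine natDegree_sum_le_of_forall_le _ _ fun j _ => ?_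
  rw [natDegree_pow]
  have := hg j
  omega

theorem add (hσ : IsSOS k σ) (hτ : IsSOS k τ) : IsSOS k (σ + τ) := by
  obtain ⟨l, g, hg, rfl⟩ := hσ
  obtain ⟨m, h, hh, rfl⟩ := hτ
  refine ⟨l + m, Fin.append g h, fun j => ?_, by rw [Fin.sum_univ_add]; simp⟩
  refine Fin.addCases (fun j => ?_) (fun j => ?_) j <;> simp [hg, hh]

theorem sq_mul {m : ℕ} {q : ℝ[X]} (h : IsSOS k σ) (hq : q.natDegree ≤ m) :
    IsSOS (k + m) (q ^ 2 * σ) := by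
  obtain ⟨l, g, hg, rfl⟩ := h
  refine ⟨l, fun j => q * g j, fun j => ?_, by simp [Finset.mul_sum, mul_pow]⟩
  have := hg j
  exact natDegree_mul_le.trans (by omega)

end IsSOS

theorem isSOS_C {c : ℝ} (k : ℕ) (hc : 0 ≤ c) : IsSOS k (C c) :=
  ⟨1, ![C √c], fun _ => by simp, by simp [← C_pow, Real.sq_sqrt hc]⟩

theorem sq_dvd_sub_C_eval_of_forall_eval_le {p : ℝ[X]} {a : ℝ} (h : ∀ x, p.eval a ≤ p.eval x) :
    (X - C a) ^ 2 ∣ p - C (p.eval a) := by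
  set q := p - C (p.eval a)
  rcases eq_or_ne q 0 with hq | hq
  · rw [hq]; exact dvd_zero _
  have hmin : IsLocalMin (fun x => p.eval x) a := Filter.Eventually.of_forall h
  have hderiv : (derivative p).eval a = 0 := by
    rw [← Polynomial.deriv]; exact hmin.deriv_eq_zero
  rw [← le_rootMultiplicity_iff hq, Nat.succ_le_iff, one_lt_rootMultiplicity_iff_isRoot hq]
  simp [q, hderiv]

theorem eval_nonneg_of_eval_sq_mul_nonneg {r : ℝ[X]} {a : ℝ}
    (h : ∀ x, 0 ≤ ((X - C a) ^ 2 * r).eval x) (x : ℝ) : 0 ≤ r.eval x := by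
  have hoff : {a}ᶜ ⊆ {x | 0 ≤ r.eval x} := fun x hx => by
    have hpos : 0 < (x - a) ^ 2 := by
      have : x - a ≠ 0 := sub_ne_zero.mpr hx
      positivity
    have := h x
    simp only [eval_mul, eval_pow, eval_sub, eval_X, eval_C] at this
    exact nonneg_of_mul_nonneg_right (by linarith) hpos
  have hclosed : IsClosed {x | 0 ≤ r.eval x} := isClosed_le continuous_const r.continuous
  exact hclosed.closure_subset_iff.mpr hoff ((dense_compl_singleton a).closure_eq ▸ Set.mem_univ x)

theorem isSOS_of_forall_eval_nonneg (n : ℕ) {p : ℝ[X]} (hdeg : p.natDegree ≤ 2 * n)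
    (hp : ∀ x, 0 ≤ p.eval x) : IsSOS n p := by
  induction n generalizing p with
  | zero =>
    rw [eq_C_of_natDegree_eq_zero (by omega : p.natDegree = 0)]
    exact isSOS_C 0 (coeff_zero_eq_eval_zero p ▸ hp 0)
  | succ n ih =>
    obtain ⟨a, ha⟩ := p.exists_forall_norm_le
    simp only [Real.norm_of_nonneg (hp _)] at ha
    obtain ⟨r, hr⟩ := sq_dvd_sub_C_eval_of_forall_eval_le ha
    have hpr : p = C (p.eval a) + (X - C a) ^ 2 * r := by rw [← hr]; ring
    rcases eq_or_ne r 0 with rfl | hr0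
    · rw [hpr, mul_zero, add_zero]; exact isSOS_C _ (hp a)
    have hrdeg : r.natDegree + 2 ≤ p.natDegree := by
      rw [hpr, natDegree_C_add, natDegree_mul (pow_ne_zero _ (X_sub_C_ne_zero a)) hr0,
        natDegree_pow, natDegree_X_sub_C]
      omega
    have hrnn := eval_nonneg_of_eval_sq_mul_nonneg (a := a) fun x => by
      rw [← hr, eval_sub, eval_C, sub_nonneg]; exact ha x
    rw [hpr]
    exact (isSOS_C _ (hp a)).add ((ih (by omega) hrnn).sq_mul (natDegree_X_sub_C a).le)

namespace Polynomial

variable {R : Type*} [CommSemiring R]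

theorem natDegree_contract_le {p : ℕ} (hp : p ≠ 0) (f : R[X]) :
    (contract p f).natDegree ≤ f.natDegree / p := by
  rw [natDegree_le_iff_coeff_eq_zero]
  intro n hn
  rw [coeff_contract hp]
  exact coeff_eq_zero_of_natDegree_lt ((Nat.div_lt_iff_lt_mul (Nat.pos_of_ne_zero hp)).mp hn)

theorem contract_two_X : contract 2 (X : R[X]) = 0 := by
  ext n
  rw [coeff_contract two_ne_zero, coeff_X, if_neg (by omega), coeff_zero]

theorem contract_two_expand_add_X_mul_expand (f g : R[X]) :
    contract 2 (expand R 2 f + X * expand R 2 g) = f := by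
  rw [contract_add two_ne_zero, contract_expand 2 two_ne_zero, contract_mul_expand two_ne_zero,
    contract_two_X, zero_mul, add_zero]

theorem expand_contract_add_X_mul_expand_contract_divX (f : R[X]) :
    expand R 2 (contract 2 f) + X * expand R 2 (contract 2 f.divX) = f := by
  ext n
  obtain ⟨m, rfl | rfl⟩ := Nat.even_or_odd' n
  · rcases m with _ | m
    · simp [coeff_expand two_pos, coeff_contract two_ne_zero]
    · rw [coeff_add, show 2 * (m + 1) = (2 * m + 1) + 1 by ring, coeff_X_mul,
        coeff_expand two_pos, coeff_expand two_pos, if_pos (by omega), if_neg (by omega),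
        coeff_contract two_ne_zero, add_zero]
      congr 1; omega
  · rw [coeff_add, coeff_X_mul, coeff_expand two_pos, coeff_expand two_pos, if_neg (by omega),
      if_pos (by omega), coeff_contract two_ne_zero, coeff_divX, zero_add]
    congr 1; omega

theorem sq_eq_expand_add_X_mul_expand (f : R[X]) :
    f ^ 2 = expand R 2 (contract 2 f ^ 2 + X * contract 2 f.divX ^ 2) +
      X * expand R 2 (2 * contract 2 f * contract 2 f.divX) := by
  conv_lhs => rw [← expand_contract_add_X_mul_expand_contract_divX f]
  simp only [map_add, map_mul, map_pow, expand_X, map_ofNat]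
  ring

end Polynomial

theorem IsSOS.exists_eq_add_X_mul_of_expand {k : ℕ} {f : ℝ[X]} (h : IsSOS (2 * k) (expand ℝ 2 f)) :
    ∃ σ τ : ℝ[X], IsSOS k σ ∧ IsSOS (k - 1) τ ∧ f = σ + X * τ := by
  obtain ⟨l, g, hg, hf⟩ := h
  refine ⟨∑ j, contract 2 (g j) ^ 2, ∑ j, contract 2 (g j).divX ^ 2,
    ⟨l, _, fun j => ?_, rfl⟩, ⟨l, _, fun j => ?_, rfl⟩, ?_⟩
  · exact (natDegree_contract_le two_ne_zero _).trans (by have := hg j; omega)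
  · refine (natDegree_contract_le two_ne_zero _).trans ?_
    rw [natDegree_divX_eq_natDegree_tsub_one]
    have := hg j
    omega
  · calc f = contract 2 (expand ℝ 2 f) := (contract_expand 2 two_ne_zero).symm
      _ = contract 2 (∑ j, (expand ℝ 2 (contract 2 (g j) ^ 2 + X * contract 2 (g j).divX ^ 2) +
            X * expand ℝ 2 (2 * contract 2 (g j) * contract 2 (g j).divX))) := by
        rw [hf]; exact congrArg _ (Finset.sum_congr rfl fun j _ => sq_eq_expand_add_X_mul_expand _)
      _ = _ := by
        rw [Finset.sum_add_distrib, ← Finset.mul_sum, ← map_sum, ← map_sum,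
          contract_two_expand_add_X_mul_expand, Finset.sum_add_distrib, Finset.mul_sum]

/-- The polynomials of degree at most `2k` that are non-negative on `ℝ₊` are exactly
`Σ_{2k} + t Σ_{2k-2}`. -/
theorem stmt_14 (k : ℕ) (hk : 1 ≤ k) :
    {f : ℝ[X] | f.natDegree ≤ 2 * k ∧ ∀ x : ℝ, 0 ≤ x → 0 ≤ f.eval x} =
      {f : ℝ[X] | ∃ σ τ : ℝ[X], IsSOS k σ ∧ IsSOS (k - 1) τ ∧ f = σ + X * τ} := by
  ext f
  constructor
  · rintro ⟨hdeg, hf⟩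
    refine IsSOS.exists_eq_add_X_mul_of_expand (isSOS_of_forall_eval_nonneg _ ?_ fun x => ?_)
    · rw [natDegree_expand]; omega
    · rw [expand_eval]; exact hf _ (sq_nonneg x)
  · rintro ⟨σ, τ, hσ, hτ, rfl⟩
    refine ⟨?_, fun x hx => ?_⟩
    · have hXτ : (X * τ).natDegree ≤ 1 + 2 * (k - 1) :=
        natDegree_mul_le.trans (add_le_add natDegree_X_le hτ.natDegree_le)
      exact (natDegree_add_le _ _).trans (max_le hσ.natDegree_le (by omega))
    · rw [eval_add, eval_mul, eval_X]
      exact add_nonneg (hσ.eval_nonneg x) (mul_nonneg hx (hτ.eval_nonneg x))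
end

section
/- Let C ⊆ ℝ^N be a closed pointed convex cone, p ∈ C and q ∈ C \ {0}. Then sup{λ ∈ ℝ : p − λq ∈ C} = inf{⟨p, v⟩ : v ∈ C*, ⟨v, q⟩ = 1} (with values in ℝ ∪ {±∞}). -/
/-- Conic duality: for a closed pointed convex cone `C ⊆ ℝ^N`, `p ∈ C` and
`q ∈ C \ {0}`, one has
`sup {λ : p - λq ∈ C} = inf {⟨p, v⟩ : v ∈ C*, ⟨v, q⟩ = 1}` in `ℝ ∪ {±∞}`. -/
theorem stmt_17 (N : ℕ) (C : Set (Fin N → ℝ)) (hclosed : IsClosed C)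
    (hsmul : ∀ a : ℝ, 0 < a → ∀ x ∈ C, a • x ∈ C)
    (hadd : ∀ x ∈ C, ∀ y ∈ C, x + y ∈ C)
    (hpointed : ∀ x ∈ C, -x ∈ C → x = 0)
    (p : Fin N → ℝ) (hp : p ∈ C) (q : Fin N → ℝ) (hq : q ∈ C) (hq0 : q ≠ 0) :
    sSup {x : EReal | ∃ lam : ℝ, p - lam • q ∈ C ∧ x = (lam : EReal)} =
      sInf {x : EReal | ∃ v : Fin N → ℝ,
        (∀ c ∈ C, 0 ≤ ∑ i, c i * v i) ∧ (∑ i, v i * q i) = 1 ∧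
        x = ((∑ i, p i * v i : ℝ) : EReal)} := by
  have hconv : Convex ℝ C := by
    intro x hx y hy a b ha hb hab
    rcases eq_or_lt_of_le ha with ha0 | ha0
    · have hb1 : b = 1 := by linarith
      simpa [← ha0, hb1] using hy
    rcases eq_or_lt_of_le hb with hb0 | hb0
    · have ha1 : a = 1 := by linarith
      simpa [← hb0, ha1] using hx
    exact hadd _ (hsmul a ha0 x hx) _ (hsmul b hb0 y hy)
  have h0S : (0 : EReal) ∈ {x : EReal | ∃ lam : ℝ, p - lam • q ∈ C ∧ x = (lam : EReal)} := by
    exact ⟨0, by simpa using hp, by simp⟩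
  apply le_antisymm
  · apply sSup_le
    rintro x ⟨lam, hlam, rfl⟩
    apply le_sInf
    rintro y ⟨v, hv, hvq, rfl⟩
    have h1 : 0 ≤ ∑ i, (p - lam • q) i * v i := hv _ hlam
    have h2 : (∑ i, (p - lam • q) i * v i)
        = (∑ i, p i * v i) - lam * (∑ i, v i * q i) := by
      rw [Finset.mul_sum, ← Finset.sum_sub_distrib]
      refine Finset.sum_congr rfl fun i _ => ?_
      simp [sub_mul]
      ring
    rw [hvq, mul_one] at h2
    rw [EReal.coe_le_coe_iff]
    linarith
  · by_contra hcon
    push_neg at hcon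
    -- obtain a real r strictly between
    obtain ⟨x, hx1, hx2⟩ := exists_between hcon
    induction x using EReal.rec with
    | bot =>
      exact absurd (lt_of_le_of_lt (le_sSup h0S) hx1) (by simp)
    | top => exact absurd (lt_of_lt_of_le hx2 le_top) (lt_irrefl _)
    | coe r =>
      have hrnot : p - r • q ∉ C := by
        intro hmem
        have hrS : (r : EReal) ∈ {x : EReal | ∃ lam : ℝ, p - lam • q ∈ C ∧ x = (lam : EReal)} :=
          ⟨r, hmem, rfl⟩
        exact absurd (lt_of_le_of_lt (le_sSup hrS) hx1) (lt_irrefl _)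
      obtain ⟨f, u, hfu, hfC⟩ := geometric_hahn_banach_point_closed hconv hclosed hrnot
      have hfnn : ∀ x ∈ C, 0 ≤ f x := by
        intro x hx
        by_contra hneg
        push_neg at hneg
        set a : ℝ := (|u| + 1) / (-f x) with ha
        have hapos : 0 < a := div_pos (by positivity) (by linarith)
        have := hfC _ (hsmul a hapos x hx)
        rw [map_smul, smul_eq_mul] at this
        have h1 : a * (-f x) = |u| + 1 := div_mul_cancel₀ _ (by linarith)
        rw [mul_neg] at h1
        have hval : a * f x = -(|u| + 1) := by linarith
        rw [hval] at this
        have := neg_abs_le u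
        linarith
      have h0C : (0 : Fin N → ℝ) ∈ C := by
        have h1 : Filter.Tendsto (fun n : ℕ => (1 / (n + 1) : ℝ) • q)
            Filter.atTop (nhds ((0 : ℝ) • q)) :=
          tendsto_one_div_add_atTop_nhds_zero_nat.smul_const q
        rw [zero_smul] at h1
        exact hclosed.mem_of_tendsto h1
          (Filter.Eventually.of_forall fun n => hsmul _ (by positivity) q hq)
      have hu0 : u < 0 := by
        have := hfC 0 h0C
        simpa using this
      have hsep : f p - r * f q < u := by
        have := hfu
        rwa [map_sub, map_smul, smul_eq_mul] at this
      have hfq0 : 0 < f q := by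
        rcases lt_or_eq_of_le (hfnn q hq) with h | h
        · exact h
        · exfalso
          have := hfnn p hp
          rw [← h] at hsep
          linarith
      -- the dual vector
      set w : Fin N → ℝ := fun i => f (fun j => if i = j then 1 else 0) / f q with hw
      have hfx : ∀ x : Fin N → ℝ, ∑ i, x i * w i = f x / f q := by
        intro x
        have hrep := LinearMap.pi_apply_eq_sum_univ (f : (Fin N → ℝ) →ₗ[ℝ] ℝ) x
        simp only [ContinuousLinearMap.coe_coe] at hrep
        rw [hrep, Finset.sum_div]
        refine Finset.sum_congr rfl fun i _ => ?_
        simp [hw, smul_eq_mul, mul_div_assoc]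
      have hwmem : ((∑ i, p i * w i : ℝ) : EReal) ∈ {x : EReal | ∃ v : Fin N → ℝ,
          (∀ c ∈ C, 0 ≤ ∑ i, c i * v i) ∧ (∑ i, v i * q i) = 1 ∧
          x = ((∑ i, p i * v i : ℝ) : EReal)} := by
        refine ⟨w, fun c hc => ?_, ?_, rfl⟩
        · rw [hfx c]; exact div_nonneg (hfnn c hc) hfq0.le
        · have : ∑ i, w i * q i = ∑ i, q i * w i := by
            refine Finset.sum_congr rfl fun i _ => mul_comm _ _
          rw [this, hfx q, div_self hfq0.ne']
      have hlt : (∑ i, p i * w i : ℝ) < r := by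
        rw [hfx p, div_lt_iff₀ hfq0]
        nlinarith
      have := lt_of_le_of_lt (sInf_le hwmem) (EReal.coe_lt_coe_iff.mpr hlt)
      exact absurd (lt_trans hx2 this) (lt_irrefl _)
end

section
/- The polynomial f(t) = 3t^4 − 4t^3 + 1 is non-negative on all of ℝ, but cannot be written as f = g_1(t) + t^2 g_2(t) where g_1 and g_2 are sums of squares of linear polynomials (i.e., sums of squares of degree ≤ 2). -/
open Polynomial

/-- `f = 3t^4 - 4t^3 + 1` is non-negative on `ℝ` but cannot be written as
`g₁ + t² g₂` with `g₁, g₂` sums of squares of linear polynomials. -/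
theorem stmt_19 :
    (∀ x : ℝ, 0 ≤ Polynomial.eval x (3 * X ^ 4 - 4 * X ^ 3 + 1 : ℝ[X])) ∧
    ¬ ∃ g₁ g₂ : ℝ[X], IsSOS 1 g₁ ∧ IsSOS 1 g₂ ∧
      (3 * X ^ 4 - 4 * X ^ 3 + 1 : ℝ[X]) = g₁ + X ^ 2 * g₂ := by
  constructor
  · intro x
    simp only [eval_add, eval_sub, eval_mul, eval_pow, eval_X, eval_one, eval_ofNat]
    nlinarith [sq_nonneg (x - 1), sq_nonneg (x*(x-1)), sq_nonneg (x^2 - x), sq_nonneg x]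
  · rintro ⟨g₁, g₂, ⟨l₁, g, hdeg, rfl⟩, ⟨l₂, h, hdeg2, rfl⟩, heq⟩
    have key : ∀ (n : ℕ) (p : Fin n → ℝ[X]), (∀ j, (p j).natDegree ≤ 1) →
        (∀ j, eval 1 (p j) = 0) →
        ∀ x : ℝ, eval x (∑ j, p j ^ 2) = (x - 1)^2 * ∑ j, (p j).coeff 1 ^ 2 := by
      intro n p hd h1 x
      rw [eval_finset_sum, Finset.mul_sum]
      apply Finset.sum_congr rfl
      intro j _
      have hp := Polynomial.eq_X_add_C_of_natDegree_le_one (hd j)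
      have h1j := h1 j
      rw [hp] at h1j
      conv_lhs => rw [hp]
      simp only [eval_add, eval_mul, eval_C, eval_X, eval_pow, mul_one] at h1j ⊢
      have h0 : (p j).coeff 0 = -(p j).coeff 1 := by linarith
      rw [h0]; ring
    -- evaluate at 1
    have e1 := congrArg (eval 1) heq
    simp only [eval_add, eval_sub, eval_mul, eval_pow, eval_X, eval_one, eval_ofNat,
      eval_finset_sum] at e1
    norm_num at e1
    have hs1 : (0:ℝ) ≤ ∑ j, eval 1 (g j) ^ 2 := Finset.sum_nonneg fun j _ => sq_nonneg _
    have hs2 : (0:ℝ) ≤ ∑ j, eval 1 (h j) ^ 2 := Finset.sum_nonneg fun j _ => sq_nonneg _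
    have hz1 : ∑ j, eval 1 (g j) ^ 2 = 0 := by nlinarith
    have hz2 : ∑ j, eval 1 (h j) ^ 2 = 0 := by nlinarith
    have hg1 : ∀ j, eval 1 (g j) = 0 := by
      intro j
      have := (Finset.sum_eq_zero_iff_of_nonneg (fun j _ => sq_nonneg (eval 1 (g j)))).mp hz1
        j (Finset.mem_univ j)
      exact pow_eq_zero_iff (by norm_num) |>.mp this
    have hh1 : ∀ j, eval 1 (h j) = 0 := by
      intro j
      have := (Finset.sum_eq_zero_iff_of_nonneg (fun j _ => sq_nonneg (eval 1 (h j)))).mp hz2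
        j (Finset.mem_univ j)
      exact pow_eq_zero_iff (by norm_num) |>.mp this
    have k1 := key l₁ g hdeg hg1
    have k2 := key l₂ h hdeg2 hh1
    set B := ∑ j, (g j).coeff 1 ^ 2 with hB
    set C := ∑ j, (h j).coeff 1 ^ 2 with hC
    have ev : ∀ x : ℝ, eval x (3 * X ^ 4 - 4 * X ^ 3 + 1 : ℝ[X]) =
        (x - 1)^2 * B + x^2 * ((x - 1)^2 * C) := by
      intro x
      have := congrArg (eval x) heq
      simpa [k1 x, k2 x] using this
    have e0 := ev 0
    have e2 := ev 2
    have em := ev (-1)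
    norm_num at e0 e2 em
    linarith
end
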